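/- arXiv:0810.4796 — 6 statements merged into one kernel-verified Lean document; each statement's English description precedes it below -/
import Mathlib

section
/- Let D be a digraph and r a vertex of D from which every vertex of D is reachable. If D contains an out-tree rooted at r with k leaves, then D contains a spanning out-tree (out-branching) rooted at r with at least k leaves. -/
/-!
Grow the out-tree one arc at a time. As every vertex is reachable from `r`, some arc `(u, w)` of
`D` leaves the current vertex set; adding it makes `w` a new leaf and destroys at most the leaf
`u`, so the number of leaves never drops until the tree spans `D`.
-/

universe u

variable {V : Type u}

/-- `T` is an out-tree of the digraph `D` rooted at `r` spanning the vertex set `S`: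
an oriented tree with all arcs directed away from the unique root `r`. -/
structure IsOutTreeOn (D : V → V → Prop) (r : V) (S : Set V) (T : V → V → Prop) : Prop where
  sub : ∀ u v, T u v → D u v
  mem_left : ∀ u v, T u v → u ∈ S
  mem_right : ∀ u v, T u v → v ∈ S
  root_mem : r ∈ S
  no_in_root : ∀ u, ¬ T u r
  unique_parent : ∀ v ∈ S, v ≠ r → ∃! u, T u v
  reach : ∀ v ∈ S, Relation.ReflTransGen T r v

/-- An out-branching of `D` rooted at `r`: a spanning out-tree. -/
def IsOutBranching (D : V → V → Prop) (r : V) (T : V → V → Prop) : Prop :=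
  IsOutTreeOn D r Set.univ T

/-- The leaves of an out-tree `T` on vertex set `S`: vertices of out-degree 0. -/
def treeLeaves (T : V → V → Prop) (S : Set V) : Set V :=
  {v ∈ S | ∀ w, ¬ T v w}

def HasOutBranchingWithLeaves (D : V → V → Prop) (r : V) (k : ℕ) : Prop :=
  ∃ T : V → V → Prop, IsOutBranching D r T ∧ k ≤ (treeLeaves T Set.univ).ncard

def HasOutBranchingOnWithLeaves (D : V → V → Prop) (r : V) (S : Set V) (k : ℕ) : Prop :=
  ∃ T : V → V → Prop, IsOutTreeOn D r S T ∧ k ≤ (treeLeaves T S).ncard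

def HasOutTreeWithLeaves (D : V → V → Prop) (k : ℕ) : Prop :=
  ∃ (r : V) (S : Set V) (T : V → V → Prop),
    IsOutTreeOn D r S T ∧ k ≤ (treeLeaves T S).ncard

/-- A (directed) walk in `D` from `a` to `b`, given by its list of vertices. -/
def IsWalk (D : V → V → Prop) (a b : V) (q : List V) : Prop :=
  q ≠ [] ∧ q.head? = some a ∧ q.getLast? = some b ∧ q.Chain' D

/-- The vertex `u` disconnects `v` from the root `r`:
every directed path from `r` to `v` contains `u`. -/
def VertexDisconnects (D : V → V → Prop) (r u v : V) : Prop :=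
  u ≠ v ∧ ∀ q : List V, IsWalk D r v q → u ∈ q

/-- The vertex set `S` disconnects `v` from the root `r`. -/
def SetDisconnects (D : V → V → Prop) (r : V) (S : Set V) (v : V) : Prop :=
  v ∉ S ∧ ∀ q : List V, IsWalk D r v q → ∃ x ∈ S, x ∈ q

/-- The arc `(u, v)` disconnects `w` from the root `r`:
every directed path from `r` to `w` uses the arc `(u, v)`. -/
def ArcDisconnects (D : V → V → Prop) (r u v w : V) : Prop :=
  ∀ q : List V, IsWalk D r w q → (u, v) ∈ q.zip q.tail

/-- A BFS tree of `D` rooted at `r`: an out-branching together with a level (depth)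
function such that `D` has no forward arcs. -/
structure IsBFSTree (D : V → V → Prop) (r : V) (T : V → V → Prop) (depth : V → ℕ) : Prop where
  branching : IsOutBranching D r T
  level : ∀ u v, T u v → depth v = depth u + 1
  root_level : depth r = 0
  no_forward : ∀ u v, D u v → depth v ≤ depth u + 1

/-- Contraction of the arc `(u, v)`: the new vertex is identified with `u`,
and `v` is removed. -/
def contractArc (D : V → V → Prop) (u v : V) : V → V → Prop :=
  fun a b => a ≠ v ∧ b ≠ v ∧ a ≠ b ∧
    (D a b ∨ (a = u ∧ D v b) ∨ (b = u ∧ D a v))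

/-- Reduction Rule 5 (two directional path rule) is applicable to `D`. -/
def Rule5Applicable (D : V → V → Prop) : Prop :=
  ∃ l : ℕ, (l = 7 ∨ l = 8) ∧
    ∃ pp : ℕ → V, Set.InjOn pp (Set.Iio l) ∧
      (∀ i, i + 1 < l → D (pp i) (pp (i + 1))) ∧
      ∃ pin ∈ ({pp (l - 2), pp (l - 1)} : Set V),
        ∃ pout ∈ ({pp 0, pp 1} : Set V),
          (∀ v ∈ pp '' Set.Iio l, (∃ u, u ∉ pp '' Set.Iio l ∧ D u v) → v = pp 0 ∨ v = pin) ∧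
          (∀ v ∈ pp '' Set.Iio l, (∃ u, u ∉ pp '' Set.Iio l ∧ D v u) → v = pp (l - 1) ∨ v = pout) ∧
          IsOutTreeOn D (pp 0) (pp '' Set.Iio l)
            (fun a b => ∃ i, i + 1 < l ∧ a = pp i ∧ b = pp (i + 1)) ∧
          (∀ T : V → V → Prop, IsOutTreeOn D (pp 0) (pp '' Set.Iio l) T →
            T = fun a b => ∃ i, i + 1 < l ∧ a = pp i ∧ b = pp (i + 1)) ∧
          ∃ Q : V → V → Prop,
            IsOutTreeOn D pin (pp '' Set.Iio l) Q ∧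
            (∀ v, {w | Q v w}.ncard ≤ 1) ∧
            (∀ T : V → V → Prop, IsOutTreeOn D pin (pp '' Set.Iio l) T → T = Q) ∧
            (∀ i, i + 1 < l → pout = pp i → ∀ bq, Q (pp (l - 1)) bq → pp (i + 1) ≠ bq)

/-- `D` with root `r` is reduced: none of the five reduction rules applies. -/
structure Reduced (D : V → V → Prop) (r : V) : Prop where
  reach : ∀ v, Relation.ReflTransGen D r v
  rule2 : ∀ u v, VertexDisconnects D r u v → ¬ D v u
  rule3 : ∀ u v w₁ w₂, D u v → w₁ ≠ w₂ →
    ArcDisconnects D r u v w₁ → ArcDisconnects D r u v w₂ → False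
  rule4 : ∀ (S : Set V) (v w : V), S.ncard ≤ 2 → SetDisconnects D r S v →
    (∀ x ∈ S, D x w) → ¬ D v w
  rule5 : ¬ Rule5Applicable D

/-- A nice forest `F` of the path `p 0, p 1, …, p l`, a spanning subforest of
`D[V(P)]` consisting of out-trees rooted at the vertices of `S`. -/
def NiceForest (D : V → V → Prop) (l : ℕ) (p : ℕ → V) (S : Set V)
    (F : V → V → Prop) : Prop :=
  (∀ u v, F u v → D u v ∧ u ∈ p '' Set.Iic l ∧ v ∈ p '' Set.Iic l) ∧
  (∀ s ∈ S, ∀ u, ¬ F u s) ∧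
  (∀ v ∈ p '' Set.Iic l, v ∉ S → ∃! u, F u v) ∧
  (∀ v ∈ p '' Set.Iic l, ∃ s ∈ S, Relation.ReflTransGen F s v) ∧
  (∀ i j, i ≤ l → j ≤ l → i < j → F (p i) (p j) →
    2 ≤ {w | F (p i) w}.ncard ∨ {u | D u (p j)}.ncard = 1) ∧
  (∀ i j, i ≤ l → j ≤ l → j < i → F (p i) (p j) → ∀ q, i < q → q ≤ l → ¬ D (p q) (p j))

/-- The key vertices of a nice forest `F`: the roots `S`, the leaves of `F`,
the vertices of out-degree at least 2 in `F`, and their children. -/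
def keyVertices (l : ℕ) (p : ℕ → V) (S : Set V) (F : V → V → Prop) : Set V :=
  S ∪ treeLeaves F (p '' Set.Iic l) ∪ {v | 2 ≤ {w | F v w}.ncard} ∪
    {v | ∃ u, F u v ∧ 2 ≤ {w | F u w}.ncard}

/-- A nice willow graph with stem `p 0, p 1, …, p (n-1)` (bottom `p 0`, top `p (n-1)`)
and backward-arc set `A2`. -/
structure IsNiceWillow (A2 : V → V → Prop) (n : ℕ) (p : ℕ → V) : Prop where
  three_le : 3 ≤ n
  inj : Set.InjOn p (Set.Iio n)
  surj : ∀ v, ∃ i < n, p i = v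
  backward : ∀ u v, A2 u v → ∃ i j, i < n ∧ j < i ∧ u = p i ∧ v = p j
  unique_source : ∀ i, i + 1 < n → ∃ u, A2 u (p i)
  top_arc1 : A2 (p (n - 1)) (p (n - 2))
  top_arc2 : A2 (p (n - 1)) (p (n - 3))
  only1 : ∀ u v, A2 u v → (u = p (n - 2) ∨ v = p (n - 2)) →
    u = p (n - 1) ∧ v = p (n - 2)
  only2 : ∀ u v, A2 u v → (u = p (n - 3) ∨ v = p (n - 3)) →
    u = p (n - 1) ∧ v = p (n - 3)
  branch : ∃ T : V → V → Prop, IsOutBranching A2 (p (n - 1)) T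

/-- The digraph of a willow: the stem arcs together with the backward arcs `A2`. -/
def willowD (A2 : V → V → Prop) (n : ℕ) (p : ℕ → V) : V → V → Prop :=
  fun a b => (∃ i, i + 1 < n ∧ a = p i ∧ b = p (i + 1)) ∨ A2 a b

/-- Disjoint union of a family of digraphs. -/
def sigmaUnion {ι : Type*} {Vv : ι → Type*} (W : ∀ i, Vv i → Vv i → Prop) :
    (Σ i, Vv i) → (Σ i, Vv i) → Prop :=
  fun x y => ∃ h : y.1 = x.1, W x.1 x.2 (cast (congrArg Vv h) y.2)

/-- Vertices of the digraph constructed from a Set Cover instance. -/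
inductive SCVert (m n : ℕ) : Type
  | root : SCVert m n
  | pv : SCVert m n
  | pv' : SCVert m n
  | s : Fin m → SCVert m n
  | e : Fin n → SCVert m n

/-- Arcs of the digraph constructed from a Set Cover instance. -/
def scArcs (m n : ℕ) (Fam : Fin m → Set (Fin n)) : SCVert m n → SCVert m n → Prop
  | .root, .s _ => True
  | .root, .pv => True
  | .root, .pv' => True
  | .s i, .e j => j ∈ Fam i
  | .e a, .e c => (c : ℕ) + 1 = (a : ℕ)
  | .s a, .s c => (c : ℕ) + 1 = (a : ℕ)
  | .e a, .s c => (a : ℕ) = 0 ∧ (c : ℕ) + 1 = m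
  | .s a, .pv => (a : ℕ) = 0
  | .pv, .pv' => True
  | .pv', .root => True
  | _, _ => False

def addArc (T : V → V → Prop) (u w : V) : V → V → Prop :=
  fun a b => T a b ∨ (a = u ∧ b = w)

theorem Relation.ReflTransGen.exists_rel_mem_notMem {R : V → V → Prop} {S : Set V} {a b : V}
    (h : Relation.ReflTransGen R a b) (ha : a ∈ S) (hb : b ∉ S) :
    ∃ u ∈ S, ∃ w ∉ S, R u w := by
  induction h with
  | refl => exact absurd ha hb
  | @tail c d _ hcd ih =>
    by_cases hc : c ∈ S
    · exact ⟨c, hc, d, hb, hcd⟩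
    · exact ih hc

namespace IsOutTreeOn

variable {D T : V → V → Prop} {r u w : V} {S : Set V}

theorem insert_addArc (hT : IsOutTreeOn D r S T) (hu : u ∈ S) (hw : w ∉ S) (huw : D u w) :
    IsOutTreeOn D r (insert w S) (addArc T u w) := by
  have hTw : ∀ x, ¬ T x w := fun x hx => hw (hT.mem_right _ _ hx)
  have hmono : ∀ x, Relation.ReflTransGen T r x → Relation.ReflTransGen (addArc T u w) r x :=
    Relation.ReflTransGen.mono (fun _ _ => Or.inl) r
  refine ⟨?_, ?_, ?_, Set.mem_insert_of_mem _ hT.root_mem, ?_, ?_, ?_⟩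
  · rintro a b (hab | ⟨rfl, rfl⟩)
    exacts [hT.sub _ _ hab, huw]
  · rintro a b (hab | ⟨rfl, rfl⟩)
    exacts [Set.mem_insert_of_mem _ (hT.mem_left _ _ hab), Set.mem_insert_of_mem _ hu]
  · rintro a b (hab | ⟨rfl, rfl⟩)
    exacts [Set.mem_insert_of_mem _ (hT.mem_right _ _ hab), Set.mem_insert _ _]
  · rintro a (har | ⟨rfl, rfl⟩)
    exacts [hT.no_in_root _ har, hw hT.root_mem]
  · intro x hx hxr
    by_cases hxw : x = w
    · subst hxw
      refine ⟨u, Or.inr ⟨rfl, rfl⟩, ?_⟩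
      rintro y (hy | ⟨rfl, -⟩)
      exacts [absurd hy (hTw y), rfl]
    · obtain ⟨p, hp, hp_unique⟩ := hT.unique_parent x (hx.resolve_left hxw) hxr
      refine ⟨p, Or.inl hp, ?_⟩
      rintro y (hy | ⟨-, rfl⟩)
      exacts [hp_unique y hy, absurd rfl hxw]
  · rintro x (rfl | hx)
    · exact (hmono u (hT.reach u hu)).tail (Or.inr ⟨rfl, rfl⟩)
    · exact hmono x (hT.reach x hx)

theorem ncard_treeLeaves_le_addArc [Finite V] (hT : IsOutTreeOn D r S T) (hu : u ∈ S)
    (hw : w ∉ S) :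
    (treeLeaves T S).ncard ≤ (treeLeaves (addArc T u w) (insert w S)).ncard := by
  set L' := treeLeaves (addArc T u w) (insert w S)
  have hwL' : w ∈ L' := by
    refine ⟨Set.mem_insert _ _, ?_⟩
    rintro y (hwy | ⟨rfl, -⟩)
    exacts [hw (hT.mem_left _ _ hwy), hw hu]
  have hsub : treeLeaves T S ⊆ insert u (L' \ {w}) := by
    intro x ⟨hxS, hx_leaf⟩
    by_cases hxu : x = u
    · exact hxu ▸ Set.mem_insert _ _
    refine Set.mem_insert_of_mem _ ⟨⟨Set.mem_insert_of_mem _ hxS, ?_⟩, ?_⟩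
    · rintro y (hxy | ⟨rfl, -⟩)
      exacts [hx_leaf y hxy, hxu rfl]
    · rintro rfl
      exact hw hxS
  calc (treeLeaves T S).ncard
      ≤ (insert u (L' \ {w})).ncard := Set.ncard_le_ncard hsub
    _ ≤ (L' \ {w}).ncard + 1 := Set.ncard_insert_le _ _
    _ = L'.ncard := Set.ncard_sdiff_singleton_add_one hwL'

theorem exists_isOutBranching_ncard_treeLeaves_le [Finite V] (hT : IsOutTreeOn D r S T)
    (hreach : ∀ v, Relation.ReflTransGen D r v) :
    ∃ T' : V → V → Prop, IsOutBranching D r T' ∧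
      (treeLeaves T S).ncard ≤ (treeLeaves T' Set.univ).ncard := by
  induction hn : Sᶜ.ncard using Nat.strong_induction_on generalizing S T with
  | _ n ih =>
  obtain hS | ⟨v, hv⟩ := Sᶜ.eq_empty_or_nonempty
  · rw [Set.compl_empty_iff.mp hS] at hT ⊢
    exact ⟨T, hT, le_rfl⟩
  obtain ⟨u, hu, w, hw, huw⟩ := (hreach v).exists_rel_mem_notMem hT.root_mem hv
  have hn' : (insert w S)ᶜ.ncard < n := by
    rw [← hn, Set.insert_eq, Set.compl_union, Set.inter_comm, ← Set.sdiff_eq]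
    exact Set.ncard_sdiff_singleton_lt_of_mem hw
  obtain ⟨T', hT', hle⟩ := ih _ hn' (hT.insert_addArc hu hw huw) rfl
  exact ⟨T', hT', (hT.ncard_treeLeaves_le_addArc hu hw).trans hle⟩

end IsOutTreeOn

theorem stmt0 [Fintype V] (D : V → V → Prop) (r : V)
    (hreach : ∀ v, Relation.ReflTransGen D r v)
    (k : ℕ) (S : Set V) (T : V → V → Prop)
    (hT : IsOutTreeOn D r S T) (hk : k ≤ (treeLeaves T S).ncard) :
    HasOutBranchingWithLeaves D r k := by
  obtain ⟨T', hT', hle⟩ := hT.exists_isOutBranching_ncard_treeLeaves_le hreach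
  exact ⟨T', hT', hk.trans hle⟩
end

section
/- Let D be a digraph with root r, and suppose every path from r to a vertex v in D passes through a vertex u (i.e., u disconnects v from r). Then no out-branching of D rooted at r contains the arc (v, u); that is, D has an r-out-branching with at least k leaves if and only if D with the arc (v, u) deleted has an r-out-branching with at least k leaves. -/
universe u

variable {V : Type u}

section Walks

variable {R S : V → V → Prop} {a b c d x : V} {l q : List V}

theorem isWalk_singleton : IsWalk R a b [c] ↔ c = a ∧ c = b :=
  ⟨fun hq => ⟨Option.some.inj hq.2.1, Option.some.inj hq.2.2.1⟩,
    fun ⟨ha, hb⟩ => ⟨List.cons_ne_nil _ _, congrArg some ha, congrArg some hb,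
      List.isChain_singleton c⟩⟩

theorem IsWalk.cons (hq : IsWalk R b c q) (hab : R a b) : IsWalk R a c (a :: q) := by
  obtain ⟨hne, hhead, hlast, hchain⟩ := hq
  obtain ⟨q, rfl⟩ := List.head?_eq_some_iff.mp hhead
  exact ⟨List.cons_ne_nil _ _, rfl, by rwa [List.getLast?_cons_of_ne_nil hne],
    List.IsChain.cons_cons hab hchain⟩

theorem IsWalk.of_cons_cons (hq : IsWalk R a b (c :: d :: l)) :
    c = a ∧ R a d ∧ IsWalk R d b (d :: l) := by
  obtain ⟨-, hhead, hlast, hchain⟩ := hq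
  obtain rfl : c = a := Option.some.inj hhead
  obtain ⟨had, hchain⟩ := List.isChain_cons_cons.mp hchain
  exact ⟨rfl, had, List.cons_ne_nil _ _, rfl,
    by rwa [List.getLast?_cons_of_ne_nil (List.cons_ne_nil _ _)] at hlast, hchain⟩

theorem IsWalk.mono (h : R ≤ S) (hq : IsWalk R a b q) : IsWalk S a b q :=
  ⟨hq.1, hq.2.1, hq.2.2.1, List.IsChain.imp (fun _ _ hab => h _ _ hab) hq.2.2.2⟩

theorem exists_isWalk_of_reflTransGen (h : Relation.ReflTransGen R a b) :
    ∃ q, IsWalk R a b q := by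
  obtain ⟨l, hchain, hlast⟩ := List.exists_isChain_cons_of_relationReflTransGen h
  exact ⟨a :: l, List.cons_ne_nil _ _, rfl,
    by rw [List.getLast?_eq_some_getLast (List.cons_ne_nil _ _), hlast], hchain⟩

theorem IsWalk.exists_isWalk_to_pred_not_mem (hq : IsWalk R a b q) (hx : x ∈ q) (hxa : x ≠ a) :
    ∃ p q', IsWalk R a p q' ∧ R p x ∧ x ∉ q' := by
  induction q generalizing a with
  | nil => exact absurd hx List.not_mem_nil
  | cons c l ih =>
    match l, hq, hx with
    | [], hq, hx =>
      obtain ⟨rfl, -⟩ := isWalk_singleton.mp hq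
      exact absurd (List.mem_singleton.mp hx) hxa
    | d :: l, hq, hx =>
      obtain ⟨rfl, had, hwalk⟩ := hq.of_cons_cons
      by_cases hxd : x = d
      · subst hxd
        exact ⟨c, [c], isWalk_singleton.mpr ⟨rfl, rfl⟩, had, by simpa using hxa⟩
      · obtain ⟨p, q', hq', hp, hxq'⟩ :=
          ih hwalk ((List.mem_cons.mp hx).resolve_left hxa) hxd
        exact ⟨p, c :: q', hq'.cons had, hp, by simp [hxa, hxq']⟩

end Walks

theorem IsOutTreeOn.of_le {D D' : V → V → Prop} {r : V} {S : Set V} {T : V → V → Prop}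
    (hT : IsOutTreeOn D r S T) (h : T ≤ D') : IsOutTreeOn D' r S T :=
  { hT with sub := h }

/-- The tree walk to `v`, cut just before its first visit to `u`, ends at the parent of `u`,
which is `v` again, and so is a walk to `v` avoiding `u`. -/
theorem IsOutBranching.not_arc_of_forall_walk_mem {D T : V → V → Prop} {r u v : V}
    (hdis : ∀ q : List V, IsWalk D r v q → u ∈ q) (hT : IsOutBranching D r T) : ¬ T v u := by
  intro hvu
  have hur : u ≠ r := by rintro rfl; exact hT.no_in_root v hvu
  obtain ⟨q, hq⟩ := exists_isWalk_of_reflTransGen (hT.reach v (Set.mem_univ v))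
  obtain ⟨p, q', hq', hpu, hu⟩ :=
    hq.exists_isWalk_to_pred_not_mem (hdis q (hq.mono hT.sub)) hur
  obtain rfl : p = v := (hT.unique_parent u (Set.mem_univ u) hur).unique hpu hvu
  exact hu (hdis q' (hq'.mono hT.sub))

theorem stmt1_general (D : V → V → Prop) (r u v : V) (k : ℕ)
    (hdis : ∀ q : List V, IsWalk D r v q → u ∈ q) :
    (∀ T : V → V → Prop, IsOutBranching D r T → ¬ T v u) ∧
    (HasOutBranchingWithLeaves D r k ↔
      HasOutBranchingWithLeaves (fun a b => D a b ∧ ¬(a = v ∧ b = u)) r k) := by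
  have hvu : ∀ T, IsOutBranching D r T → ¬ T v u := fun T hT =>
    hT.not_arc_of_forall_walk_mem hdis
  refine ⟨hvu, ?_, ?_⟩
  · rintro ⟨T, hT, hk⟩
    refine ⟨T, hT.of_le fun a b hab => ⟨hT.sub a b hab, ?_⟩, hk⟩
    rintro ⟨rfl, rfl⟩
    exact hvu T hT hab
  · rintro ⟨T, hT, hk⟩
    exact ⟨T, hT.of_le fun a b hab => (hT.sub a b hab).1, hk⟩

theorem stmt1 [Fintype V] (D : V → V → Prop) (r u v : V) (k : ℕ)
    (hdis : ∀ q : List V, IsWalk D r v q → u ∈ q) :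
    (∀ T : V → V → Prop, IsOutBranching D r T → ¬ T v u) ∧
    (HasOutBranchingWithLeaves D r k ↔
      HasOutBranchingWithLeaves (fun a b => D a b ∧ ¬(a = v ∧ b = u)) r k) :=
  stmt1_general D r u v k hdis
end

section
/- Let T be a BFS tree (an out-branching with no forward arcs) of a digraph D rooted at r, and let P = p_1 p_2 ... p_l be a directed path in T all of whose vertices have out-degree 1 in T. Then for any i < l, the only arc of D from the vertex set {p_1, ..., p_i} to {p_{i+1}, ..., p_l} is the arc (p_i, p_{i+1}); consequently, the path p_i p_{i+1} ... p_j is the unique directed path from p_i to p_j in the induced subdigraph D[V(P)] for any i < j. -/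
universe u

variable {V : Type u}

/-!
Along the tree path `P` the depth grows by exactly one per arc, so the absence of forward arcs
says that an arc `p a → p b` of `D` inside `P` has `b ≤ a + 1`. Hence a walk in `D[V(P)]` climbs
at most one index per step: from `p i` to `p j` it visits every `p k` with `i < k ≤ j`, and a walk
without repeated vertices can only be `p i, p (i + 1), …, p j`.
-/

section Walk

variable {R : V → V → Prop} {a b x y : V} {q : List V}

theorem isWalk_singleton_iff : IsWalk R a b [x] ↔ x = a ∧ x = b := by
  simp only [IsWalk, List.head?_cons, List.getLast?_singleton, Option.some_inj, ne_eq,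
    List.cons_ne_nil, not_false_eq_true, true_and]
  exact ⟨fun h => ⟨h.1, h.2.1⟩, fun ⟨ha, hb⟩ => ⟨ha, hb, .singleton x⟩⟩

theorem isWalk_cons_cons_iff :
    IsWalk R a b (x :: y :: q) ↔ x = a ∧ R x y ∧ IsWalk R y b (y :: q) := by
  simp only [IsWalk, ne_eq, reduceCtorEq, not_false_eq_true, List.head?_cons, Option.some_inj,
    List.getLast?_cons_cons, true_and]
  constructor
  · rintro ⟨ha, hb, hc⟩
    exact ⟨ha, (List.isChain_cons_cons.mp hc).1, hb, (List.isChain_cons_cons.mp hc).2⟩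
  · rintro ⟨ha, hxy, hb, hc⟩
    exact ⟨ha, hb, List.isChain_cons_cons.mpr ⟨hxy, hc⟩⟩

end Walk

section IndexedPath

variable {R : V → V → Prop} {l : ℕ} {p : ℕ → V}

theorem map_range_eq_cons (i n : ℕ) :
    (List.range (n + 1)).map (fun t => p (i + t)) =
      p i :: (List.range n).map (fun t => p (i + 1 + t)) := by
  simp only [← Function.comp_def p, ← List.map_map, ← List.range'_eq_map_range, List.range'_succ]
  rfl

variable (hinj : Set.InjOn p (Set.Iic l))
  (hR : ∀ a x, a ≤ l → R (p a) x → ∃ b ≤ a + 1, x = p b)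
include hinj hR

theorem mem_of_isWalk :
    ∀ {q : List V} {a c i : ℕ}, a < i → i ≤ c → c ≤ l → IsWalk R (p a) (p c) q → p i ∈ q
  | [], _, _, _, _, _, _, hw => absurd rfl hw.1
  | [_], a, c, _, hai, hic, hc, hw => by
    obtain ⟨rfl, hac⟩ := isWalk_singleton_iff.mp hw
    have := hinj (Set.mem_Iic.mpr (by omega : a ≤ l)) (Set.mem_Iic.mpr hc) hac
    omega
  | _ :: y :: q, a, c, i, hai, hic, hc, hw => by
    obtain ⟨rfl, hxy, hw⟩ := isWalk_cons_cons_iff.mp hw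
    obtain ⟨b, hba, rfl⟩ := hR a y (by omega) hxy
    rcases lt_or_eq_of_le (show b ≤ i by omega) with hbi | rfl
    · exact List.mem_cons_of_mem _ (mem_of_isWalk hbi hic hc hw)
    · simp

theorem eq_map_range_of_isWalk_of_nodup :
    ∀ {q : List V} {i j : ℕ}, i ≤ j → j ≤ l → IsWalk R (p i) (p j) q → q.Nodup →
      q = (List.range (j - i + 1)).map (fun t => p (i + t))
  | [], _, _, _, _, hw, _ => absurd rfl hw.1
  | [_], i, j, hij, hj, hw, _ => by
    obtain ⟨rfl, hij'⟩ := isWalk_singleton_iff.mp hw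
    obtain rfl := hinj (Set.mem_Iic.mpr (hij.trans hj)) (Set.mem_Iic.mpr hj) hij'
    simp
  | _ :: y :: q, i, j, hij, hj, hw, hnd => by
    obtain ⟨rfl, hxy, hw⟩ := isWalk_cons_cons_iff.mp hw
    obtain ⟨hfresh, hnd⟩ := List.nodup_cons.mp hnd
    obtain ⟨b, hbi, rfl⟩ := hR i y (hij.trans hj) hxy
    -- from `p b` with `b < i`, the walk must climb through `p i` again to reach `p j`
    have hb_eq : b = i + 1 := by
      by_contra hne
      rcases lt_or_eq_of_le (show b ≤ i by omega) with hlt | rfl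
      · exact hfresh (mem_of_isWalk hinj hR hlt hij hj hw)
      · exact hfresh List.mem_cons_self
    subst hb_eq
    have hji : j ≠ i := by
      rintro rfl
      exact hfresh (List.mem_of_getLast? hw.2.2.1)
    rw [show j - i + 1 = j - (i + 1) + 1 + 1 by omega, map_range_eq_cons,
      ← eq_map_range_of_isWalk_of_nodup (by omega) hj hw hnd]

end IndexedPath

section BFS

variable {D T : V → V → Prop} {r : V} {depth : V → ℕ} {l : ℕ} {p : ℕ → V}

theorem IsBFSTree.depth_path (hBFS : IsBFSTree D r T depth)
    (hpath : ∀ i, i < l → T (p i) (p (i + 1))) :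
    ∀ k, k ≤ l → depth (p k) = depth (p 0) + k
  | 0, _ => rfl
  | k + 1, hk => by
    rw [hBFS.level _ _ (hpath k hk), hBFS.depth_path hpath k (by omega), add_assoc]

theorem IsBFSTree.le_succ_of_adj_path (hBFS : IsBFSTree D r T depth)
    (hpath : ∀ i, i < l → T (p i) (p (i + 1))) {a b : ℕ} (ha : a ≤ l) (hb : b ≤ l)
    (hab : D (p a) (p b)) : b ≤ a + 1 := by
  have := hBFS.no_forward _ _ hab
  rw [hBFS.depth_path hpath a ha, hBFS.depth_path hpath b hb] at this
  omega

end BFS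

theorem stmt4_general (D T : V → V → Prop) (r : V) (depth : V → ℕ)
    (hBFS : IsBFSTree D r T depth)
    (l : ℕ) (p : ℕ → V) (hinj : Set.InjOn p (Set.Iic l))
    (hpath : ∀ i, i < l → T (p i) (p (i + 1))) :
    (∀ i a b, i < l → a ≤ i → i < b → b ≤ l → D (p a) (p b) → a = i ∧ b = i + 1) ∧
    (∀ i j, i ≤ j → j ≤ l → ∀ q : List V,
      IsWalk (fun a b => D a b ∧ a ∈ p '' Set.Iic l ∧ b ∈ p '' Set.Iic l) (p i) (p j) q →
      q.Nodup → q = (List.range (j - i + 1)).map (fun t => p (i + t))) := by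
  refine ⟨fun i a b hi hai hib hb hab => ?_, fun i j hij hj q hw hnd => ?_⟩
  · have := hBFS.le_succ_of_adj_path hpath (by omega) hb hab
    omega
  · refine eq_map_range_of_isWalk_of_nodup hinj ?_ hij hj hw hnd
    rintro a _ ha ⟨hab, -, b, hb, rfl⟩
    exact ⟨b, hBFS.le_succ_of_adj_path hpath ha hb hab, rfl⟩

theorem stmt4 (D T : V → V → Prop) (r : V) (depth : V → ℕ)
    (hBFS : IsBFSTree D r T depth)
    (l : ℕ) (p : ℕ → V) (hinj : Set.InjOn p (Set.Iic l))
    (hpath : ∀ i, i < l → T (p i) (p (i + 1)))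
    (hdeg : ∀ i, i ≤ l → ∃! w, T (p i) w) :
    (∀ i a b, i < l → a ≤ i → i < b → b ≤ l → D (p a) (p b) → a = i ∧ b = i + 1) ∧
    (∀ i j, i ≤ j → j ≤ l → ∀ q : List V,
      IsWalk (fun a b => D a b ∧ a ∈ p '' Set.Iic l ∧ b ∈ p '' Set.Iic l) (p i) (p j) q →
      q.Nodup → q = (List.range (j - i + 1)).map (fun t => p (i + t))) :=
  stmt4_general D T r depth hBFS l p hinj hpath
end

section
/- Let D be a reduced no-instance digraph with root r, T a BFS tree, P a path of out-degree-1 vertices of T, F a nice forest of P with the maximum number of leaves, and P' = p_x ... p_y a subpath of P containing no key vertices of F such that neither (p_{x-1}, p_x) nor (p_y, p_{y+1}) is an arc of F. Then F restricted to V(P') is a single directed path. -/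
universe u

variable {V : Type u}

/-!
By the BFS property an arc of `F` between path vertices advances at most one step along `P`,
and a vertex of `P'` that is not key has exactly one child and a parent of out-degree one.
Suppose some `p z` of `P'` has its parent beyond it but is not an ancestor of `p x`, and take
`z` least. Then `p (z - 1)` is not a descendant of `p z`, so moving `p z` under `p (z - 1)`
gives a nice forest in which the old parent of `p z` has become a leaf, contradicting the
maximality of `F`. Hence the vertices of `P'` whose parent lies beyond `p y` are all ancestors
of `p x` and so pairwise comparable; as descendants of `P'` never pass `p y`, there is exactly
one of them, every vertex of `P'` descends from it inside `P'`, and `F` restricted to `P'` is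
the path starting there.
-/

namespace Relation

variable {α : Type*} {r : α → α → Prop}

theorem ReflTransGen.exists_notMem_mem {s : Set α} {a b : α} (h : ReflTransGen r a b)
    (ha : a ∉ s) (hb : b ∈ s) : ∃ u v, r u v ∧ u ∉ s ∧ v ∈ s := by
  induction h with
  | refl => exact absurd hb ha
  | @tail c d _ hcd ih =>
    by_cases hc : c ∈ s
    · exact ih hc
    · exact ⟨c, d, hcd, hc, hb⟩

theorem ReflTransGen.total_of_left_unique (U : Relator.LeftUnique r) {a b c : α}
    (hb : ReflTransGen r b a) (hc : ReflTransGen r c a) :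
    ReflTransGen r b c ∨ ReflTransGen r c b := by
  rcases ReflTransGen.total_of_right_unique (r := Function.swap r) (fun _ _ _ h h' => U h h')
    (reflTransGen_swap.2 hb) (reflTransGen_swap.2 hc) with h | h
  · exact .inr (reflTransGen_swap.1 h)
  · exact .inl (reflTransGen_swap.1 h)

theorem not_transGen_self_of_reflTransGen (U : Relator.LeftUnique r) {s v : α}
    (hs : ∀ u, ¬ r u s) (h : ReflTransGen r s v) : ¬ TransGen r v v := by
  induction h with
  | refl =>
    intro hc
    obtain ⟨u, -, hu⟩ := TransGen.tail'_iff.mp hc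
    exact hs u hu
  | @tail u w _ huw ih =>
    intro hc
    obtain ⟨u', hwu', hu'⟩ := TransGen.tail'_iff.mp hc
    rw [U hu' huw] at hwu'
    exact ih (TransGen.head' huw hwu')

theorem transGen_of_chain {q : ℕ → α} {k : ℕ} (h : ∀ i < k, r (q i) (q (i + 1)))
    {j : ℕ} (hjk : j < k) : TransGen r (q j) (q k) := by
  induction k with
  | zero => omega
  | succ k ih =>
    rcases Nat.lt_succ_iff_lt_or_eq.mp hjk with hj | rfl
    · exact (ih (fun i hi => h i (by omega)) hj).tail (h k (by omega))
    · exact .single (h j (by omega))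

theorem injOn_Iic_of_chain (hacyc : ∀ a, ¬ TransGen r a a) {q : ℕ → α} {n : ℕ}
    (h : ∀ i < n, r (q i) (q (i + 1))) : Set.InjOn q (Set.Iic n) := by
  have key : ∀ i j, i < j → j ≤ n → q i ≠ q j := fun i j hij hj hq =>
    hacyc (q i) (by
      have := transGen_of_chain (fun k hk => h k (by omega)) hij
      rwa [← hq] at this)
  intro i hi j hj hq
  simp only [Set.mem_Iic] at hi hj
  by_contra hne
  rcases Nat.lt_or_gt_of_ne hne with hij | hij
  · exact key i j hij hj hq
  · exact key j i hij hi hq.symm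

end Relation

section PathEnumeration

open Relation

variable {α : Type*} {r : α → α → Prop} {A : Set α}

theorem exists_extend_chain (hfun : ∀ a ∈ A, ∀ b c, r a b → r a c → b = c)
    (hacyc : ∀ a, ¬ TransGen r a a) {q : ℕ → α} {k : ℕ}
    (hreach : ∀ v ∈ A, ReflTransGen (fun a b => r a b ∧ b ∈ A) (q 0) v) (hq0 : q 0 ∈ A)
    (hq : ∀ i < k, r (q i) (q (i + 1)) ∧ q (i + 1) ∈ A) (hk : k + 1 < A.ncard) :
    ∃ b, r (q k) b ∧ b ∈ A := by
  have hqA : q '' Set.Iic k ⊆ A := by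
    rintro _ ⟨i, hi, rfl⟩
    cases i with
    | zero => exact hq0
    | succ i => exact (hq i (Nat.lt_of_succ_le hi)).2
  have hcard : (q '' Set.Iic k).ncard = k + 1 := by
    rw [(injOn_Iic_of_chain hacyc fun i hi => (hq i hi).1).ncard_image, Set.ncard_Iic_nat]
  -- A path from `q 0` to a vertex off the chain leaves the chain somewhere; since `r` is
  -- functional on `A`, it can only leave from the last vertex `q k`.
  obtain ⟨v, hvA, hvq⟩ := Set.exists_mem_notMem_of_ncard_lt_ncard (hcard ▸ hk)
    ((Set.finite_Iic k).image q)
  obtain ⟨u, b, ⟨hub, hbA⟩, hu, hb⟩ := (hreach v hvA).exists_notMem_mem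
    (s := (q '' Set.Iic k)ᶜ) (fun h => h ⟨0, Nat.zero_le k, rfl⟩) hvq
  obtain ⟨j, hj, rfl⟩ := not_not.mp hu
  obtain hjk | rfl := (Set.mem_Iic.mp hj).lt_or_eq
  · exact absurd ⟨j + 1, hjk, hfun _ (hqA ⟨j, hj, rfl⟩) _ _ (hq j hjk).1 hub⟩ hb
  · exact ⟨b, hub, hbA⟩

theorem exists_chain_of_reflTransGen (hfun : ∀ a ∈ A, ∀ b c, r a b → r a c → b = c)
    (hacyc : ∀ a, ¬ TransGen r a a) {s : α} (hs : s ∈ A)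
    (hreach : ∀ v ∈ A, ReflTransGen (fun a b => r a b ∧ b ∈ A) s v) {n : ℕ}
    (hA : A.ncard = n + 1) :
    ∃ q : ℕ → α, q 0 = s ∧ ∀ i < n, r (q i) (q (i + 1)) ∧ q (i + 1) ∈ A := by
  have hnext : ∀ a, ∃ b, (∃ c, r a c ∧ c ∈ A) → r a b ∧ b ∈ A := by
    intro a
    by_cases h : ∃ c, r a c ∧ c ∈ A
    · obtain ⟨c, hc⟩ := h
      exact ⟨c, fun _ => hc⟩
    · exact ⟨a, fun h' => absurd h' h⟩
  choose next hnext using hnext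
  refine ⟨fun i => next^[i] s, rfl, ?_⟩
  have hsucc : ∀ i, next^[i + 1] s = next (next^[i] s) := fun i =>
    Function.iterate_succ_apply' next i s
  suffices ∀ k ≤ n, ∀ i < k, r (next^[i] s) (next^[i + 1] s) ∧ next^[i + 1] s ∈ A from
    this n le_rfl
  intro k
  induction k with
  | zero => simp
  | succ k ih =>
    intro hk i hi
    obtain hik | rfl := Nat.lt_succ_iff_lt_or_eq.mp hi
    · exact ih (by omega) i hik
    · rw [hsucc]
      exact hnext _ (exists_extend_chain (q := fun i => next^[i] s) hfun hacyc hreach hs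
        (ih (by omega)) (by omega))

theorem exists_path_enumeration (hfun : ∀ a ∈ A, ∀ b c, r a b → r a c → b = c)
    (hacyc : ∀ a, ¬ TransGen r a a) {s : α} (hs : s ∈ A)
    (hreach : ∀ v ∈ A, ReflTransGen (fun a b => r a b ∧ b ∈ A) s v) {n : ℕ}
    (hA : A.ncard = n + 1) :
    ∃ q : ℕ → α, Set.InjOn q (Set.Iic n) ∧ q '' Set.Iic n = A ∧
      ∀ a b, (r a b ∧ a ∈ A ∧ b ∈ A) ↔ ∃ i, i < n ∧ a = q i ∧ b = q (i + 1) := by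
  obtain ⟨q, rfl, hq⟩ := exists_chain_of_reflTransGen hfun hacyc hs hreach hA
  have hinj := injOn_Iic_of_chain hacyc fun i hi => (hq i hi).1
  have hqA : q '' Set.Iic n ⊆ A := by
    rintro _ ⟨i, hi, rfl⟩
    cases i with
    | zero => exact hs
    | succ i => exact (hq i (by simp at hi; omega)).2
  have himage : q '' Set.Iic n = A := Set.eq_of_subset_of_ncard_le hqA
    (by rw [hinj.ncard_image, Set.ncard_Iic_nat, hA])
    (Set.finite_of_ncard_pos (by omega))
  refine ⟨q, hinj, himage, fun a b => ⟨?_, ?_⟩⟩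
  · rintro ⟨hab, ha, hb⟩
    rw [← himage] at ha hb
    obtain ⟨i, hi, rfl⟩ := ha
    obtain ⟨j, hj, rfl⟩ := hb
    simp only [Set.mem_Iic] at hi hj
    obtain hin | rfl := hi.lt_or_eq
    · exact ⟨i, hin, rfl, hfun _ (hqA ⟨i, hi, rfl⟩) _ _ hab (hq i hin).1⟩
    · have hji : ReflTransGen r (q j) (q i) := by
        obtain hji | rfl := hj.lt_or_eq
        · exact (transGen_of_chain (fun k hk => (hq k hk).1) hji).to_reflTransGen
        · exact .refl
      exact (hacyc _ (TransGen.tail' hji hab)).elim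
  · rintro ⟨i, hi, rfl, rfl⟩
    exact ⟨(hq i hi).1, hqA ⟨i, by simp; omega, rfl⟩, hqA ⟨i + 1, by simp; omega, rfl⟩⟩

end PathEnumeration

section NiceForest

open Relation

variable {D F : V → V → Prop} {l : ℕ} {p : ℕ → V} {S : Set V}

theorem NiceForest.parent_unique (hF : NiceForest D l p S F) : Relator.LeftUnique F := by
  intro u u' v hu hu'
  obtain ⟨hsub, hroot, hpar, -⟩ := hF
  exact (hpar v (hsub u v hu).2.2 fun hv => hroot v hv u hu).unique hu hu'

theorem NiceForest.acyclic (hF : NiceForest D l p S F) (v : V) : ¬ TransGen F v v := by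
  intro hv
  obtain ⟨u, -, hu⟩ := TransGen.tail'_iff.mp hv
  obtain ⟨s, hs, hsv⟩ := hF.2.2.2.1 v (hF.1 u v hu).2.2
  exact not_transGen_self_of_reflTransGen hF.parent_unique (hF.2.1 s hs) hsv hv

def reparent (F : V → V → Prop) (v w : V) : V → V → Prop :=
  fun a b => (b = w ∧ a = v) ∨ (b ≠ w ∧ F a b)

theorem reparent_of_ne {v w a b : V} (hb : b ≠ w) (h : F a b) : reparent F v w a b :=
  .inr ⟨hb, h⟩

theorem reflTransGen_reparent {v w a b : V} (h : ReflTransGen F a b)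
    (hwb : ¬ ReflTransGen F w b) : ReflTransGen (reparent F v w) a b := by
  induction h with
  | refl => exact .refl
  | @tail c d _ hcd ih =>
    have hd : d ≠ w := fun hd => hwb (hd ▸ .refl)
    exact (ih fun hwc => hwb (hwc.tail hcd)).tail (reparent_of_ne hd hcd)

theorem exists_reflTransGen_reparent {P : Set V} {v w : V}
    (hreach : ∀ b ∈ P, ∃ s ∈ S, ReflTransGen F s b) (hv : v ∈ P) (hwv : ¬ ReflTransGen F w v)
    {b : V} (hb : b ∈ P) : ∃ s ∈ S, ReflTransGen (reparent F v w) s b := by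
  obtain ⟨s, hs, hsb⟩ := hreach b hb
  clear hb
  induction hsb with
  | refl => exact ⟨s, hs, .refl⟩
  | @tail a b _ hab ih =>
    by_cases hbw : b = w
    · obtain ⟨s', hs', hs'v⟩ := hreach v hv
      exact ⟨s', hs', hbw ▸ (reflTransGen_reparent hs'v hwv).tail (.inl ⟨rfl, rfl⟩)⟩
    · obtain ⟨s', hs', hs'a⟩ := ih
      exact ⟨s', hs', hs'a.tail (reparent_of_ne hbw hab)⟩

theorem existsUnique_reparent {v w b : V} (h : ∃! a, F a b) :
    ∃! a, reparent F v w a b := by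
  by_cases hbw : b = w
  · subst hbw
    refine ⟨v, .inl ⟨rfl, rfl⟩, ?_⟩
    rintro a (⟨-, rfl⟩ | ⟨hne, -⟩)
    exacts [rfl, absurd rfl hne]
  · obtain ⟨a, hab, hau⟩ := h
    refine ⟨a, reparent_of_ne hbw hab, ?_⟩
    rintro a' (⟨hb', -⟩ | ⟨-, ha'b⟩)
    exacts [absurd hb' hbw, hau a' ha'b]

theorem setOf_subset_reparent {u v w a : V} (hU : Relator.LeftUnique F) (hu : F u w)
    (ha : a ≠ u) : {b | F a b} ⊆ {b | reparent F v w a b} := by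
  intro b hb
  refine reparent_of_ne (fun hbw => ha ?_) hb
  subst hbw
  exact hU hb hu

theorem NiceForest.reparent [Finite V] (hF : NiceForest D l p S F)
    (hinj : Set.InjOn p (Set.Iic l)) {i : ℕ} (hi : i + 1 ≤ l) (hD : D (p i) (p (i + 1)))
    {u c : V} (hu : F u (p (i + 1))) (hsolo : ∀ w, F u w → w = p (i + 1))
    (hc : F (p i) c) (hcne : c ≠ p (i + 1)) (hnd : ¬ ReflTransGen F (p (i + 1)) (p i)) :
    NiceForest D l p S (_root_.reparent F (p i) (p (i + 1))) := by
  have hU := hF.parent_unique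
  obtain ⟨hsub, hroot, hpar, hreach, hfwd, hbwd⟩ := hF
  have hP : ∀ j ≤ l, p j ∈ p '' Set.Iic l := fun j hj => ⟨j, hj, rfl⟩
  have hnew : _root_.reparent F (p i) (p (i + 1)) (p i) (p (i + 1)) := .inl ⟨rfl, rfl⟩
  refine ⟨?_, ?_, ?_, ?_, ?_, ?_⟩
  · rintro a b (⟨rfl, rfl⟩ | ⟨-, hab⟩)
    · exact ⟨hD, hP i (by omega), hP (i + 1) hi⟩
    · exact hsub a b hab
  · rintro s hs a (⟨rfl, -⟩ | ⟨-, has⟩)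
    · exact hroot _ hs u hu
    · exact hroot s hs a has
  · exact fun b hb hbS => existsUnique_reparent (hpar b hb hbS)
  · exact fun b hb => exists_reflTransGen_reparent hreach (hP i (by omega)) hnd hb
  · rintro j k hj hk hjk (⟨hkw, hjv⟩ | ⟨hkw, hjk'⟩)
    -- `p i` keeps its old child `c`, so the new forward arc leaves from a vertex of out-degree 2.
    · refine .inl ((Set.one_lt_ncard_iff (Set.toFinite _)).mpr ⟨c, p k, ?_, ?_, hkw ▸ hcne⟩)
      · rw [hjv]
        exact reparent_of_ne hcne hc
      · rw [hjv, hkw]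
        exact hnew
    · have hju : p j ≠ u := by
        rintro rfl
        exact hkw (hsolo _ hjk')
      refine (hfwd j k hj hk hjk hjk').imp (fun h2 => h2.trans ?_) id
      exact Set.ncard_le_ncard (setOf_subset_reparent hU hu hju)
  · rintro j k hj hk hkj (⟨hkw, hjv⟩ | ⟨-, hjk'⟩)
    · have := hinj (Set.mem_Iic.mpr hj) (Set.mem_Iic.mpr (by omega : i ≤ l)) hjv
      have := hinj (Set.mem_Iic.mpr hk) (Set.mem_Iic.mpr hi) hkw
      omega
    · exact hbwd j k hj hk hkj hjk'

theorem treeLeaves_ssubset_reparent {P : Set V} {u v w c : V}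
    (huP : u ∈ P) (hu : F u w) (hsolo : ∀ b, F u b → b = w) (hc : F v c) (hcw : c ≠ w) :
    treeLeaves F P ⊂ treeLeaves (reparent F v w) P := by
  have hvu : v ≠ u := by
    rintro rfl
    exact hcw (hsolo c hc)
  refine ⟨?_, fun hsub => (hsub ⟨huP, ?_⟩).2 w hu⟩
  · rintro a ⟨haP, ha⟩
    refine ⟨haP, ?_⟩
    rintro b (⟨-, rfl⟩ | ⟨-, hab⟩)
    exacts [ha c hc, ha b hab]
  · rintro b (⟨-, rfl⟩ | ⟨hbw, hub⟩)
    exacts [hvu rfl, hbw (hsolo b hub)]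

end NiceForest

theorem IsBFSTree.le_succ_of_path {D T : V → V → Prop} {r : V} {depth : V → ℕ} {l : ℕ}
    {p : ℕ → V} (hBFS : IsBFSTree D r T depth) (hpath : ∀ i < l, T (p i) (p (i + 1)))
    {a b : ℕ} (ha : a ≤ l) (hb : b ≤ l) (hab : D (p a) (p b)) : b ≤ a + 1 := by
  have hdepth : ∀ i ≤ l, depth (p i) = depth (p 0) + i := by
    intro i hi
    induction i with
    | zero => rfl
    | succ i ih => rw [hBFS.level _ _ (hpath i hi), ih (by omega), Nat.add_assoc]
  have := hBFS.no_forward _ _ hab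
  rw [hdepth a ha, hdepth b hb] at this
  omega

section KeyVertices

variable {F : V → V → Prop} {l : ℕ} {p : ℕ → V} {S : Set V} {v : V}

theorem notMem_of_notMem_keyVertices (h : v ∉ keyVertices l p S F) : v ∉ S :=
  fun hv => h (.inl (.inl (.inl hv)))

theorem exists_of_notMem_keyVertices (hv : v ∈ p '' Set.Iic l)
    (h : v ∉ keyVertices l p S F) : ∃ w, F v w := by
  by_contra! hw
  exact h (.inl (.inl (.inr ⟨hv, hw⟩)))

theorem subsingleton_of_notMem_keyVertices [Finite V] (h : v ∉ keyVertices l p S F) :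
    {w | F v w}.Subsingleton := by
  rw [← Set.ncard_le_one_iff_subsingleton]
  by_contra! h2
  exact h (.inl (.inr h2))

theorem subsingleton_of_arc_of_notMem_keyVertices [Finite V] (h : v ∉ keyVertices l p S F)
    {u : V} (hu : F u v) : {w | F u w}.Subsingleton := by
  rw [← Set.ncard_le_one_iff_subsingleton]
  by_contra! h2
  exact h (.inr ⟨u, hu, h2⟩)

end KeyVertices

section Segment

open Relation

variable {D F : V → V → Prop} {l : ℕ} {p : ℕ → V} {S : Set V} {x y : ℕ}

theorem NiceForest.lt_or_add_one_eq_of_arc (hF : NiceForest D l p S F)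
    (hle : ∀ a b, a ≤ l → b ≤ l → F (p a) (p b) → b ≤ a + 1) (hb1 : ¬ F (p (x - 1)) (p x))
    {i a : ℕ} (hxi : x ≤ i) (hi : i ≤ l) (ha : a ≤ l) (h : F (p a) (p i)) :
    i < a ∨ (x < i ∧ a + 1 = i) := by
  have hai : a ≠ i := by
    rintro rfl
    exact hF.acyclic _ (.single h)
  have := hle a i ha hi h
  rcases Nat.lt_or_ge i a with hia | hia
  · exact .inl hia
  · refine .inr ⟨lt_of_le_of_ne hxi fun hxi' => hb1 ?_, by omega⟩
    subst hxi'
    rwa [show x - 1 = a by omega]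

theorem NiceForest.index_le_of_reflTransGen (hF : NiceForest D l p S F)
    (hle : ∀ a b, a ≤ l → b ≤ l → F (p a) (p b) → b ≤ a + 1) (hb2 : ¬ F (p y) (p (y + 1)))
    (hy : y ≤ l) {i : ℕ} {v : V} (hi : i ≤ y) (h : ReflTransGen F (p i) v) :
    ∃ m ≤ y, v = p m := by
  induction h with
  | refl => exact ⟨i, hi, rfl⟩
  | @tail a b _ hab ih =>
    obtain ⟨m, hm, rfl⟩ := ih
    obtain ⟨m', hm', rfl⟩ := (hF.1 _ _ hab).2.2
    have := hle m m' (by omega) hm' hab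
    refine ⟨m', ?_, rfl⟩
    by_contra hlt
    obtain rfl : m = y := by omega
    obtain rfl : m' = m + 1 := by omega
    exact hb2 hab

theorem NiceForest.not_reflTransGen_of_lt (hF : NiceForest D l p S F)
    (hinj : Set.InjOn p (Set.Iic l))
    (hle : ∀ a b, a ≤ l → b ≤ l → F (p a) (p b) → b ≤ a + 1) (hb1 : ¬ F (p (x - 1)) (p x))
    {b : ℕ} (hb : b ≤ l) (hbx : ¬ ReflTransGen F (p b) (p x))
    (hgood : ∀ c a, x ≤ c → c < b → a ≤ l → c < a → F (p a) (p c) →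
      ReflTransGen F (p c) (p x))
    {c : ℕ} (hxc : x ≤ c) (hcb : c < b) : ¬ ReflTransGen F (p b) (p c) := by
  induction c using Nat.strong_induction_on with
  | _ c ih =>
  intro h
  have hne : p c ≠ p b := fun h' => by
    have := hinj (Set.mem_Iic.2 (by omega)) (Set.mem_Iic.2 hb) h'
    omega
  obtain ⟨u, hbu, hu⟩ :=
    TransGen.tail'_iff.mp ((reflTransGen_iff_eq_or_transGen.mp h).resolve_left hne)
  obtain ⟨a, ha, rfl⟩ := (hF.1 _ _ hu).2.1
  rcases hF.lt_or_add_one_eq_of_arc hle hb1 hxc (by omega) ha hu with hca | ⟨hxc', rfl⟩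
  · exact hbx (h.trans (hgood c a hxc hcb ha hca hu))
  · exact ih a (by omega) (by omega) (by omega) hbu

theorem NiceForest.reflTransGen_of_lt_parent [Finite V] (hF : NiceForest D l p S F)
    (hmax : ∀ F' : V → V → Prop, NiceForest D l p S F' →
      (treeLeaves F' (p '' Set.Iic l)).ncard ≤ (treeLeaves F (p '' Set.Iic l)).ncard)
    (hinj : Set.InjOn p (Set.Iic l))
    (hle : ∀ a b, a ≤ l → b ≤ l → F (p a) (p b) → b ≤ a + 1)
    (hstep : ∀ i < l, D (p i) (p (i + 1))) (hb1 : ¬ F (p (x - 1)) (p x)) (hy : y < l)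
    (hnokey : ∀ i, x ≤ i → i ≤ y → p i ∉ keyVertices l p S F)
    {z a : ℕ} (hxz : x ≤ z) (hzy : z ≤ y) (ha : a ≤ l) (hza : z < a) (h : F (p a) (p z)) :
    ReflTransGen F (p z) (p x) := by
  induction z using Nat.strong_induction_on generalizing a with
  | _ b ih =>
  by_contra hbx
  have hxb : x < b := lt_of_le_of_ne hxz fun hb => hbx (hb ▸ .refl)
  obtain ⟨i, rfl⟩ : ∃ i, b = i + 1 := ⟨b - 1, by omega⟩
  have hnd : ¬ ReflTransGen F (p (i + 1)) (p i) :=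
    hF.not_reflTransGen_of_lt hinj hle hb1 (by omega) hbx
      (fun c a' hxc hcb ha' hca' h' => ih c hcb hxc (by omega) ha' hca' h') (by omega) (by omega)
  obtain ⟨c, hc⟩ := exists_of_notMem_keyVertices ⟨i, Set.mem_Iic.2 (by omega), rfl⟩
    (hnokey i (by omega) (by omega))
  have hcne : c ≠ p (i + 1) := by
    rintro rfl
    have := hinj (Set.mem_Iic.2 (by omega)) (Set.mem_Iic.2 ha) (hF.parent_unique hc h)
    omega
  have hsolo : ∀ w, F (p a) w → w = p (i + 1) := fun w hw =>
    subsingleton_of_arc_of_notMem_keyVertices (hnokey (i + 1) hxz hzy) h hw h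
  have hmore := Set.ncard_lt_ncard
    (treeLeaves_ssubset_reparent (P := p '' Set.Iic l) ⟨a, ha, rfl⟩ h hsolo hc hcne)
  exact (hmax _ (hF.reparent hinj (by omega) (hstep i (by omega)) h hsolo hc hcne hnd)).not_gt
    hmore

theorem NiceForest.eq_of_reflTransGen (hF : NiceForest D l p S F)
    (hinj : Set.InjOn p (Set.Iic l))
    (hle : ∀ a b, a ≤ l → b ≤ l → F (p a) (p b) → b ≤ a + 1) (hb2 : ¬ F (p y) (p (y + 1)))
    (hy : y ≤ l) {s s' a : ℕ} (hs : s ≤ y) (hs' : s' ≤ y) (ha : a ≤ l) (hya : y < a)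
    (h : F (p a) (p s')) (hr : ReflTransGen F (p s) (p s')) : s = s' := by
  by_contra hne
  have hne' : p s' ≠ p s := fun h' =>
    hne (hinj (Set.mem_Iic.2 (by omega)) (Set.mem_Iic.2 (by omega)) h').symm
  obtain ⟨u, hsu, hu⟩ :=
    TransGen.tail'_iff.mp ((reflTransGen_iff_eq_or_transGen.mp hr).resolve_left hne')
  rw [hF.parent_unique hu h] at hsu
  obtain ⟨m, hm, hma⟩ := hF.index_le_of_reflTransGen hle hb2 hy hs hsu
  have := hinj (Set.mem_Iic.2 ha) (Set.mem_Iic.2 (by omega)) hma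
  omega

theorem NiceForest.eq_of_lt_parent (hF : NiceForest D l p S F)
    (hinj : Set.InjOn p (Set.Iic l))
    (hle : ∀ a b, a ≤ l → b ≤ l → F (p a) (p b) → b ≤ a + 1) (hb2 : ¬ F (p y) (p (y + 1)))
    (hy : y ≤ l)
    (hleft : ∀ z a, x ≤ z → z ≤ y → a ≤ l → z < a → F (p a) (p z) →
      ReflTransGen F (p z) (p x))
    {s s' a a' : ℕ} (hxs : x ≤ s) (hs : s ≤ y) (ha : a ≤ l) (hya : y < a) (h : F (p a) (p s))
    (hxs' : x ≤ s') (hs' : s' ≤ y) (ha' : a' ≤ l) (hya' : y < a') (h' : F (p a') (p s')) :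
    s = s' := by
  rcases ReflTransGen.total_of_left_unique hF.parent_unique
    (hleft s a hxs hs ha (by omega) h) (hleft s' a' hxs' hs' ha' (by omega) h') with hr | hr
  · exact hF.eq_of_reflTransGen hinj hle hb2 hy hs hs' ha' hya' h' hr
  · exact (hF.eq_of_reflTransGen hinj hle hb2 hy hs' hs ha hya h hr).symm

theorem NiceForest.exists_lt_parent (hF : NiceForest D l p S F)
    (hle : ∀ a b, a ≤ l → b ≤ l → F (p a) (p b) → b ≤ a + 1) (hb1 : ¬ F (p (x - 1)) (p x))
    (hxy : x ≤ y) (hy : y ≤ l) (hS : ∀ i, x ≤ i → i ≤ y → p i ∉ S) :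
    ∃ s a, x ≤ s ∧ s ≤ y ∧ a ≤ l ∧ y < a ∧ F (p a) (p s) := by
  obtain ⟨r, hr, hrx⟩ := hF.2.2.2.1 (p x) ⟨x, Set.mem_Iic.2 (by omega), rfl⟩
  have hrP : r ∉ p '' Set.Icc x y := by
    rintro ⟨i, hi, rfl⟩
    exact hS i hi.1 hi.2 hr
  obtain ⟨u, _, hu, huP, s, ⟨hxs, hsy⟩, rfl⟩ :=
    hrx.exists_notMem_mem hrP ⟨x, ⟨le_rfl, hxy⟩, rfl⟩
  obtain ⟨a, ha, rfl⟩ := (hF.1 _ _ hu).2.1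
  refine ⟨s, a, hxs, hsy, ha, ?_, hu⟩
  by_contra hay
  rcases hF.lt_or_add_one_eq_of_arc hle hb1 hxs (by omega) ha hu with h | h <;>
    exact huP ⟨a, ⟨by omega, by omega⟩, rfl⟩

theorem NiceForest.reflTransGen_of_unique_lt_parent (hF : NiceForest D l p S F)
    (hle : ∀ a b, a ≤ l → b ≤ l → F (p a) (p b) → b ≤ a + 1) (hb1 : ¬ F (p (x - 1)) (p x))
    (hy : y ≤ l) (hS : ∀ i, x ≤ i → i ≤ y → p i ∉ S)
    {s : ℕ} (huniq : ∀ s' a, x ≤ s' → s' ≤ y → a ≤ l → y < a → F (p a) (p s') → s' = s)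
    {i : ℕ} (hxi : x ≤ i) (hiy : i ≤ y) :
    ReflTransGen (fun u v => F u v ∧ v ∈ p '' Set.Icc x y) (p s) (p i) := by
  obtain ⟨r, hr, hri⟩ := hF.2.2.2.1 (p i) ⟨i, Set.mem_Iic.2 (by omega), rfl⟩
  suffices ∀ v, ReflTransGen F r v → v ∈ p '' Set.Icc x y →
      ReflTransGen (fun u v => F u v ∧ v ∈ p '' Set.Icc x y) (p s) v from
    this _ hri ⟨i, ⟨hxi, hiy⟩, rfl⟩
  intro v hv
  induction hv with
  | refl =>
    rintro ⟨j, hj, rfl⟩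
    exact absurd hr (hS j hj.1 hj.2)
  | @tail u w _ huw ih =>
    rintro ⟨j, ⟨hxj, hjy⟩, rfl⟩
    obtain ⟨a, ha, rfl⟩ := (hF.1 _ _ huw).2.1
    by_cases hay : a ≤ y
    · have hxa : x ≤ a := by
        rcases hF.lt_or_add_one_eq_of_arc hle hb1 hxj (by omega) ha huw with h | h <;> omega
      exact (ih ⟨a, ⟨hxa, hay⟩, rfl⟩).tail ⟨huw, j, ⟨hxj, hjy⟩, rfl⟩
    · rw [huniq j a hxj hjy ha (by omega) huw]

end Segment

theorem stmt9_general [Fintype V] (D T : V → V → Prop) (r : V) (depth : V → ℕ)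
    (hBFS : IsBFSTree D r T depth)
    (l : ℕ) (p : ℕ → V) (hinj : Set.InjOn p (Set.Iic l))
    (hpath : ∀ i, i < l → T (p i) (p (i + 1)))
    (S : Set V)
    (F : V → V → Prop) (hF : NiceForest D l p S F)
    (hmax : ∀ F' : V → V → Prop, NiceForest D l p S F' →
      (treeLeaves F' (p '' Set.Iic l)).ncard ≤ (treeLeaves F (p '' Set.Iic l)).ncard)
    (x y : ℕ) (hxy : x ≤ y) (hy : y < l)
    (hnokey : ∀ i, x ≤ i → i ≤ y → p i ∉ keyVertices l p S F)
    (hb1 : ¬ F (p (x - 1)) (p x)) (hb2 : ¬ F (p y) (p (y + 1))) :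
    ∃ qf : ℕ → V, Set.InjOn qf (Set.Iic (y - x)) ∧
      qf '' Set.Iic (y - x) = p '' Set.Icc x y ∧
      (∀ a b, (F a b ∧ a ∈ p '' Set.Icc x y ∧ b ∈ p '' Set.Icc x y) ↔
        ∃ i, i < y - x ∧ a = qf i ∧ b = qf (i + 1)) := by
  have hle : ∀ a b, a ≤ l → b ≤ l → F (p a) (p b) → b ≤ a + 1 := fun a b ha hb h =>
    hBFS.le_succ_of_path hpath ha hb (hF.1 _ _ h).1
  have hstep : ∀ i < l, D (p i) (p (i + 1)) := fun i hi => hBFS.branching.sub _ _ (hpath i hi)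
  have hS : ∀ i, x ≤ i → i ≤ y → p i ∉ S := fun i hxi hiy =>
    notMem_of_notMem_keyVertices (hnokey i hxi hiy)
  have hleft : ∀ z a, x ≤ z → z ≤ y → a ≤ l → z < a → F (p a) (p z) →
      Relation.ReflTransGen F (p z) (p x) := fun z a =>
    hF.reflTransGen_of_lt_parent hmax hinj hle hstep hb1 hy hnokey
  obtain ⟨s, a, hxs, hsy, ha, hya, hs⟩ := hF.exists_lt_parent hle hb1 hxy hy.le hS
  have huniq : ∀ s' a', x ≤ s' → s' ≤ y → a' ≤ l → y < a' → F (p a') (p s') → s' = s :=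
    fun s' a' hxs' hs'y ha' hya' h' =>
      (hF.eq_of_lt_parent hinj hle hb2 hy.le hleft hxs hsy ha hya hs hxs' hs'y ha' hya' h').symm
  refine exists_path_enumeration (r := F) (A := p '' Set.Icc x y) ?_ hF.acyclic
    ⟨s, ⟨hxs, hsy⟩, rfl⟩ ?_ ?_
  · rintro _ ⟨i, hi, rfl⟩ b c hb hc
    exact subsingleton_of_notMem_keyVertices (hnokey i hi.1 hi.2) hb hc
  · rintro _ ⟨i, hi, rfl⟩
    exact hF.reflTransGen_of_unique_lt_parent hle hb1 hy.le hS huniq hi.1 hi.2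
  · rw [(hinj.mono fun i hi => Set.mem_Iic.2 (hi.2.trans hy.le)).ncard_image, Set.ncard_Icc_nat]
    omega

theorem stmt9 [Fintype V] (D T : V → V → Prop) (r : V) (depth : V → ℕ) (k : ℕ)
    (hred : Reduced D r)
    (hno : ¬ HasOutBranchingWithLeaves D r k)
    (hBFS : IsBFSTree D r T depth)
    (l : ℕ) (p : ℕ → V) (hinj : Set.InjOn p (Set.Iic l))
    (hpath : ∀ i, i < l → T (p i) (p (i + 1)))
    (hdeg : ∀ i, i ≤ l → ∃! w, T (p i) w)
    (S : Set V)
    (hS : S = {v ∈ p '' Set.Iio l | ∃ u, u ∉ p '' Set.Iic l ∧ D u v})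
    (F : V → V → Prop) (hF : NiceForest D l p S F)
    (hmax : ∀ F' : V → V → Prop, NiceForest D l p S F' →
      (treeLeaves F' (p '' Set.Iic l)).ncard ≤ (treeLeaves F (p '' Set.Iic l)).ncard)
    (x y : ℕ) (hx : 1 ≤ x) (hxy : x ≤ y) (hy : y < l)
    (hnokey : ∀ i, x ≤ i → i ≤ y → p i ∉ keyVertices l p S F)
    (hb1 : ¬ F (p (x - 1)) (p x)) (hb2 : ¬ F (p y) (p (y + 1))) :
    ∃ qf : ℕ → V, Set.InjOn qf (Set.Iic (y - x)) ∧
      qf '' Set.Iic (y - x) = p '' Set.Icc x y ∧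
      (∀ a b, (F a b ∧ a ∈ p '' Set.Icc x y ∧ b ∈ p '' Set.Icc x y) ↔
        ∃ i, i < y - x ∧ a = qf i ∧ b = qf (i + 1)) :=
  stmt9_general D T r depth hBFS l p hinj hpath S F hF hmax x y hxy hy hnokey hb1 hb2
end

section
/- In the setting of a reduced no-instance with nice forest F of maximum number of leaves and key-vertex-free subpath P' = p_x...p_y of P (with boundary arcs not in F): for any two vertices p_i, p_j in V(P') with i <= j - 2, the vertex p_j appears before p_i on the directed path Q' = F[V(P')]. -/
universe u

variable {V : Type u}

/-!
Inside the key-vertex-free window every vertex has out-degree at most one in `F`, so by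
niceness a forward arc `p s → p t` of `F` is the only arc of `D` entering `p t`; since the
BFS-tree arc `p (t - 1) → p t` also enters `p t`, we get `t = s + 1`. Two consecutive such
arcs `p s → p (s + 1) → p (s + 2)` would make `(p s, p (s + 1))` disconnect both `p (s + 1)`
and `p (s + 2)` from the root, which Reduction Rule 3 forbids. Hence, walking along `Q'`, the
index on `P` rises only in isolated steps of one and otherwise drops, so it never exceeds an
earlier value by two.
-/

theorem List.mem_zip_tail_iff {α : Type*} {a b : α} {q : List α} :
    (a, b) ∈ q.zip q.tail ↔ ∃ l₁ l₂, q = l₁ ++ a :: b :: l₂ := by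
  induction q with
  | nil => simp
  | cons c q ih =>
    cases q with
    | nil =>
      simp only [List.tail_cons, List.zip_nil_right, List.not_mem_nil, false_iff, not_exists]
      intro l₁ l₂ h
      have := congrArg List.length h
      simp only [List.length_cons, List.length_nil, zero_add, List.length_append] at this
      omega
    | cons d q =>
      simp only [List.tail_cons, List.zip_cons_cons, List.mem_cons, Prod.mk.injEq] at ih ⊢
      rw [ih]
      constructor
      · rintro (⟨rfl, rfl⟩ | ⟨l₁, l₂, h⟩)
        · exact ⟨[], q, rfl⟩
        · exact ⟨c :: l₁, l₂, by rw [h, List.cons_append]⟩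
      · rintro ⟨_ | ⟨e, l₁⟩, l₂, h⟩
        · simp only [List.nil_append, List.cons.injEq] at h
          exact Or.inl ⟨h.1.symm, h.2.1.symm⟩
        · simp only [List.cons_append, List.cons.injEq] at h
          exact Or.inr ⟨l₁, l₂, h.2⟩

theorem IsWalk.exists_eq_append_arc {D : V → V → Prop} {a b : V} {q : List V}
    (hq : IsWalk D a b q) (hab : a ≠ b) :
    ∃ l v, q = l ++ [v, b] ∧ D v b ∧ IsWalk D a v (l ++ [v]) := by
  obtain ⟨-, hhead, hlast, hchain⟩ := hq
  obtain ⟨q', rfl⟩ := List.getLast?_eq_some_iff.1 hlast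
  rcases q'.eq_nil_or_concat with rfl | ⟨l, v, rfl⟩
  · simp only [List.nil_append, List.head?_cons, Option.some.injEq] at hhead
    exact absurd hhead.symm hab
  · simp only [List.concat_eq_append, List.append_assoc, List.singleton_append] at hchain hhead ⊢
    obtain ⟨hc, hvb, -⟩ := (List.isChain_append_cons_cons (l₂ := [])).1 hchain
    refine ⟨l, v, rfl, hvb, by simp, ?_, by simp, hc⟩
    cases l <;> simpa using hhead

theorem arcDisconnects_of_forall_inNeighbor_eq {D : V → V → Prop} {r u w : V} (hw : w ≠ r)
    (hu : ∀ v, D v w → v = u) : ArcDisconnects D r u w w := by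
  intro q hq
  obtain ⟨l, v, rfl, hvw, -⟩ := hq.exists_eq_append_arc hw.symm
  rw [hu v hvw]
  exact List.mem_zip_tail_iff.2 ⟨l, [], rfl⟩

theorem ArcDisconnects.of_forall_inNeighbor_eq {D : V → V → Prop} {r u v v' w : V}
    (h : ArcDisconnects D r u v v') (hw : w ≠ r) (hv' : ∀ x, D x w → x = v') :
    ArcDisconnects D r u v w := by
  intro q hq
  obtain ⟨l, x, rfl, hxw, hwalk⟩ := hq.exists_eq_append_arc hw.symm
  obtain rfl := hv' x hxw
  obtain ⟨l₁, l₂, h⟩ := List.mem_zip_tail_iff.1 (h _ hwalk)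
  exact List.mem_zip_tail_iff.2 ⟨l₁, l₂ ++ [w], by simpa using congrArg (· ++ [w]) h⟩

theorem Reduced.false_of_inNeighbor_chain {D : V → V → Prop} {r u v w : V}
    (hred : Reduced D r) (huv : D u v) (hvw : v ≠ w) (hv : v ≠ r) (hw : w ≠ r)
    (hv' : ∀ x, D x v → x = u) (hw' : ∀ x, D x w → x = v) : False :=
  have h := arcDisconnects_of_forall_inNeighbor_eq hv hv'
  hred.rule3 u v v w huv hvw h (h.of_forall_inNeighbor_eq hw hw')

theorem le_add_one_of_isolated_ascents {G : ℕ → ℕ} {n : ℕ}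
    (hstep : ∀ c < n, G (c + 1) = G c + 1 ∨ G (c + 1) < G c)
    (hiso : ∀ c, c + 2 ≤ n → G (c + 1) = G c + 1 → G (c + 2) ≠ G (c + 1) + 1)
    {a b : ℕ} (hba : b ≤ a) (ha : a ≤ n) : G a ≤ G b + 1 := by
  suffices key : G a ≤ G b + 1 ∧ (a < n → G (a + 1) = G a + 1 → G a ≤ G b) from key.1
  induction a, hba using Nat.le_induction with
  | base => omega
  | succ a hba ih =>
    obtain ⟨ih₁, ih₂⟩ := ih (by omega)
    rcases hstep a (by omega) with h | h
    · exact ⟨by omega, fun _ h' => absurd h' (hiso a (by omega) h)⟩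
    · exact ⟨by omega, fun _ _ => by omega⟩

namespace NiceForest

variable {D F : V → V → Prop} {l : ℕ} {p : ℕ → V} {S : Set V}

theorem forall_inNeighbor_eq_of_forward_arc (hF : NiceForest D l p S F) {s t : ℕ}
    (ht : t ≤ l) (hst : s < t) (hdeg : {w | F (p s) w}.ncard < 2) (hFst : F (p s) (p t)) :
    ∀ u, D u (p t) → u = p s := by
  obtain ⟨u₀, hu₀⟩ := Set.ncard_eq_one.1
    ((hF.2.2.2.2.1 s t (by omega) ht hst hFst).resolve_left (by omega))
  have hin : ∀ u, D u (p t) ↔ u = u₀ := fun u => Set.ext_iff.1 hu₀ u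
  intro u hu
  rw [(hin u).1 hu, ← (hin _).1 (hF.1 _ _ hFst).1]

theorem eq_succ_of_forward_arc (hF : NiceForest D l p S F) (hinj : Set.InjOn p (Set.Iic l))
    (hpath : ∀ i < l, D (p i) (p (i + 1))) {s t : ℕ}
    (ht : t ≤ l) (hst : s < t) (hdeg : {w | F (p s) w}.ncard < 2) (hFst : F (p s) (p t)) :
    t = s + 1 := by
  have hpred : D (p (t - 1)) (p t) := by
    simpa [Nat.sub_add_cancel (by omega : 1 ≤ t)] using hpath (t - 1) (by omega)
  have := hinj (Set.mem_Iic.2 (by omega)) (Set.mem_Iic.2 (by omega))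
    (hF.forall_inNeighbor_eq_of_forward_arc ht hst hdeg hFst _ hpred)
  omega

theorem not_consecutive_forward_arcs (hF : NiceForest D l p S F) {r : V} {T : V → V → Prop}
    (hred : Reduced D r) (hT : IsOutBranching D r T) (hinj : Set.InjOn p (Set.Iic l))
    (hpath : ∀ i < l, T (p i) (p (i + 1))) {s : ℕ} (hs : s + 2 ≤ l)
    (hdeg₀ : {w | F (p s) w}.ncard < 2) (hdeg₁ : {w | F (p (s + 1)) w}.ncard < 2) :
    ¬ (F (p s) (p (s + 1)) ∧ F (p (s + 1)) (p (s + 2))) := by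
  rintro ⟨h₀, h₁⟩
  have hne_root : ∀ i < l, p (i + 1) ≠ r := fun i hi h =>
    hT.no_in_root _ (h ▸ hpath i hi)
  refine hred.false_of_inNeighbor_chain (hF.1 _ _ h₀).1 (fun h => ?_)
    (hne_root s (by omega)) (hne_root (s + 1) (by omega))
    (hF.forall_inNeighbor_eq_of_forward_arc (by omega) (by omega) hdeg₀ h₀)
    (hF.forall_inNeighbor_eq_of_forward_arc hs (by omega) hdeg₁ h₁)
  have := hinj (Set.mem_Iic.2 (by omega)) (Set.mem_Iic.2 (by omega)) h
  omega

theorem le_add_one_of_forest_path (hF : NiceForest D l p S F) {r : V} {T : V → V → Prop}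
    (hred : Reduced D r) (hT : IsOutBranching D r T) (hinj : Set.InjOn p (Set.Iic l))
    (hpath : ∀ i < l, T (p i) (p (i + 1))) {x y : ℕ} (hy : y ≤ l)
    (hdeg : ∀ s, x ≤ s → s ≤ y → {w | F (p s) w}.ncard < 2)
    {G : ℕ → ℕ} {n : ℕ} (hG : ∀ c ≤ n, x ≤ G c ∧ G c ≤ y) (hGne : ∀ c < n, G c ≠ G (c + 1))
    (harc : ∀ c < n, F (p (G c)) (p (G (c + 1)))) {a b : ℕ} (hba : b ≤ a) (ha : a ≤ n) :
    G a ≤ G b + 1 := by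
  refine le_add_one_of_isolated_ascents (fun c hc => ?_) (fun c hc h₀ h₁ => ?_) hba ha
  · have := hG c hc.le
    have := hG (c + 1) hc
    refine (lt_or_gt_of_ne (hGne c hc)).imp (fun hlt => ?_) id
    exact hF.eq_succ_of_forward_arc hinj (fun i hi => hT.sub _ _ (hpath i hi)) (by omega) hlt
      (hdeg _ (by omega) (by omega)) (harc c hc)
  · have := hG c (by omega)
    have := hG (c + 2) hc
    refine hF.not_consecutive_forward_arcs hred hT hinj hpath (s := G c) (by omega)
      (hdeg _ (by omega) (by omega)) (hdeg _ (by omega) (by omega)) ⟨?_, ?_⟩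
    · simpa [h₀] using harc c (by omega)
    · simpa [h₀, h₁] using harc (c + 1) (by omega)

end NiceForest

theorem stmt10_general (D T : V → V → Prop) (r : V) (depth : V → ℕ)
    (hred : Reduced D r)
    (hBFS : IsBFSTree D r T depth)
    (l : ℕ) (p : ℕ → V) (hinj : Set.InjOn p (Set.Iic l))
    (hpath : ∀ i, i < l → T (p i) (p (i + 1)))
    (S : Set V)
    (F : V → V → Prop) (hF : NiceForest D l p S F)
    (x y : ℕ) (hy : y < l)
    (hnokey : ∀ i, x ≤ i → i ≤ y → p i ∉ keyVertices l p S F)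
    (qf : ℕ → V) (hqinj : Set.InjOn qf (Set.Iic (y - x)))
    (hqim : qf '' Set.Iic (y - x) = p '' Set.Icc x y)
    (hqarc : ∀ a b, (F a b ∧ a ∈ p '' Set.Icc x y ∧ b ∈ p '' Set.Icc x y) ↔
      ∃ i, i < y - x ∧ a = qf i ∧ b = qf (i + 1)) :
    ∀ i j a b, x ≤ i → i + 2 ≤ j → j ≤ y → a ≤ y - x → b ≤ y - x →
      qf a = p j → qf b = p i → a < b := by
  intro i j a b hxi hij hjy ha hb hqa hqb
  have houtdeg : ∀ s, x ≤ s → s ≤ y → {w | F (p s) w}.ncard < 2 := fun s h₀ h₁ =>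
    lt_of_not_ge fun h => hnokey s h₀ h₁ (Or.inl (Or.inr h))
  have hmem : ∀ c ≤ y - x, ∃ m, (x ≤ m ∧ m ≤ y) ∧ p m = qf c := fun c hc =>
    hqim.subset ⟨c, hc, rfl⟩
  choose! G hG hGq using hmem
  have hGne : ∀ c < y - x, G c ≠ G (c + 1) := fun c hc h => by
    have := hqinj (Set.mem_Iic.2 hc.le) (Set.mem_Iic.2 hc)
      (by rw [← hGq c hc.le, ← hGq (c + 1) hc, h])
    omega
  have harc : ∀ c < y - x, F (p (G c)) (p (G (c + 1))) := fun c hc => by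
    rw [hGq c hc.le, hGq (c + 1) hc]
    exact ((hqarc _ _).2 ⟨c, hc, rfl, rfl⟩).1
  have hGa : G a = j := hinj (Set.mem_Iic.2 (by have := hG a ha; omega))
    (Set.mem_Iic.2 (by omega)) ((hGq a ha).trans hqa)
  have hGb : G b = i := hinj (Set.mem_Iic.2 (by have := hG b hb; omega))
    (Set.mem_Iic.2 (by omega)) ((hGq b hb).trans hqb)
  by_contra! hab
  have := hF.le_add_one_of_forest_path hred hBFS.branching hinj hpath hy.le houtdeg hG hGne
    harc hab ha
  omega

theorem stmt10 [Fintype V] (D T : V → V → Prop) (r : V) (depth : V → ℕ) (k : ℕ)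
    (hred : Reduced D r)
    (hno : ¬ HasOutBranchingWithLeaves D r k)
    (hBFS : IsBFSTree D r T depth)
    (l : ℕ) (p : ℕ → V) (hinj : Set.InjOn p (Set.Iic l))
    (hpath : ∀ i, i < l → T (p i) (p (i + 1)))
    (hdeg : ∀ i, i ≤ l → ∃! w, T (p i) w)
    (S : Set V)
    (hS : S = {v ∈ p '' Set.Iio l | ∃ u, u ∉ p '' Set.Iic l ∧ D u v})
    (F : V → V → Prop) (hF : NiceForest D l p S F)
    (hmax : ∀ F' : V → V → Prop, NiceForest D l p S F' →
      (treeLeaves F' (p '' Set.Iic l)).ncard ≤ (treeLeaves F (p '' Set.Iic l)).ncard)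
    (x y : ℕ) (hx : 1 ≤ x) (hxy : x ≤ y) (hy : y < l)
    (hnokey : ∀ i, x ≤ i → i ≤ y → p i ∉ keyVertices l p S F)
    (hb1 : ¬ F (p (x - 1)) (p x)) (hb2 : ¬ F (p y) (p (y + 1)))
    (qf : ℕ → V) (hqinj : Set.InjOn qf (Set.Iic (y - x)))
    (hqim : qf '' Set.Iic (y - x) = p '' Set.Icc x y)
    (hqarc : ∀ a b, (F a b ∧ a ∈ p '' Set.Icc x y ∧ b ∈ p '' Set.Icc x y) ↔
      ∃ i, i < y - x ∧ a = qf i ∧ b = qf (i + 1)) :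
    ∀ i j a b, x ≤ i → i + 2 ≤ j → j ≤ y → a ≤ y - x → b ≤ y - x →
      qf a = p j → qf b = p i → a < b :=
  stmt10_general D T r depth hred hBFS l p hinj hpath S F hF x y hy hnokey qf hqinj hqim hqarc
end

section
/- In the setting of a reduced no-instance with nice forest F of maximum number of leaves and key-vertex-free subpath P' of P: for any vertex x not in V(P'), at most 2 vertices of P' have arcs to x. -/
universe u

variable {V : Type u}

/-!
Write `P' = p x, …, p y`. Its vertices are neither roots, leaves nor branching vertices of `F`,
so each has exactly one `F`-parent and one `F`-child, and since BFS levels forbid arcs that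
skip forward along `P`, the parent of `p m` is `p (m - 1)` or lies further up `P`. If `p m` has
a parent further up, it must reach `p (m - 1)` in `F`: otherwise re-hanging `p m` below
`p (m - 1)` gives a nice forest with one more leaf. Hence `F` climbs `P'` in blocks, and the
start of each block (except the topmost) hangs below the top vertex of the next block.

Consequently a vertex that starts no block is entered only from its predecessor on `P`, and a
block start only from its predecessor, its own block, or its parent; a chord from the next
block would contradict Rule 4. Now let `p i₁, p i₂, p i₃` (`i₁ < i₂ < i₃`) all have an arc to
`z`. If no block starts in `(i₂, i₃]`, then `p i₂` separates `p i₃` from the root; otherwise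
`{p i₁, p i₃}` separates `p i₂`. Either way Rule 4 forbids the arc from the separated vertex
to `z`.
-/

theorem IsWalk.mem_right {D : V → V → Prop} {a b : V} {q : List V} (h : IsWalk D a b q) :
    b ∈ q :=
  List.mem_of_getLast? h.2.2.1

theorem IsWalk.of_append_singleton {D : V → V → Prop} {a b c : V} {q : List V}
    (h : IsWalk D a b (q ++ [c])) (hq : q ≠ []) : ∃ u, IsWalk D a u q ∧ D u b := by
  obtain ⟨-, hhead, hlast, hchain⟩ := h
  obtain rfl : c = b := by simpa using hlast
  obtain ⟨hq₀, -, hlink⟩ := List.isChain_append.mp hchain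
  refine ⟨q.getLast hq, ⟨hq, ?_, List.getLast?_eq_some_getLast hq, hq₀⟩, ?_⟩
  · rwa [List.head?_append_of_ne_nil _ hq] at hhead
  · exact hlink _ (List.getLast?_eq_some_getLast hq) _ rfl

theorem IsWalk.exists_mem_of_inArcs_mem {D : V → V → Prop} {a : V} {A X : Set V}
    (ha : a ∉ A) (hA : ∀ w ∈ A, w ∉ X → ∀ u, D u w → u ∈ A) :
    ∀ {b : V} {q : List V}, b ∈ A → IsWalk D a b q → ∃ x ∈ X, x ∈ q := by
  intro b q hb hq
  induction q using List.reverseRecOn generalizing b with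
  | nil => exact absurd rfl hq.1
  | append_singleton q c ih =>
    by_cases hbX : b ∈ X
    · exact ⟨b, hbX, hq.mem_right⟩
    rcases eq_or_ne q [] with rfl | hq₀
    · obtain ⟨-, hhead, hlast, -⟩ := hq
      simp only [List.nil_append, List.head?_cons, List.getLast?_singleton, Option.some.injEq]
        at hhead hlast
      exact absurd (hhead ▸ hlast ▸ hb) ha
    obtain ⟨u, hu, hub⟩ := hq.of_append_singleton hq₀
    obtain ⟨x, hxX, hxq⟩ := ih (hA b hb hbX u hub) hu
    exact ⟨x, hxX, List.mem_append_left _ hxq⟩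

theorem setDisconnects_of_inArcs_mem {D : V → V → Prop} {r v : V} {A X : Set V}
    (hr : r ∉ A) (hA : ∀ w ∈ A, w ∉ X → ∀ u, D u w → u ∈ A) (hv : v ∈ A) (hvX : v ∉ X) :
    SetDisconnects D r X v :=
  ⟨hvX, fun _ hq => IsWalk.exists_mem_of_inArcs_mem hr hA hv hq⟩

theorem Set.ncard_le_two_of_forall_not_lt_lt {α : Type*} [LinearOrder α] {s : Set α}
    (h : ∀ a ∈ s, ∀ b ∈ s, ∀ c ∈ s, a < b → ¬ b < c) : s.ncard ≤ 2 := by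
  by_contra hs
  obtain ⟨a, b, c, ha, hb, hc, hab, hac, hbc⟩ :=
    (Set.two_lt_ncard_iff (Set.finite_of_ncard_pos (by omega : 0 < s.ncard))).1 (by omega)
  rcases hab.lt_or_gt with hab | hab <;> rcases hac.lt_or_gt with hac | hac <;>
    rcases hbc.lt_or_gt with hbc | hbc
  all_goals first
    | exact h a ha b hb c hc ‹_› ‹_› | exact h a ha c hc b hb ‹_› ‹_›
    | exact h b hb a ha c hc ‹_› ‹_› | exact h b hb c hc a ha ‹_› ‹_›
    | exact h c hc a ha b hb ‹_› ‹_› | exact h c hc b hb a ha ‹_› ‹_›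

namespace IsBFSTree

variable {D T : V → V → Prop} {r : V} {depth : V → ℕ} {l : ℕ} {p : ℕ → V}

theorem depth_path_s12 (hB : IsBFSTree D r T depth) (hpath : ∀ i, i < l → T (p i) (p (i + 1)))
    {i : ℕ} (hi : i ≤ l) : depth (p i) = depth (p 0) + i := by
  induction i with
  | zero => rfl
  | succ i ih => rw [hB.level _ _ (hpath i hi), ih (by omega), Nat.add_assoc]

theorem le_succ_of_adj_path_s12 (hB : IsBFSTree D r T depth)
    (hpath : ∀ i, i < l → T (p i) (p (i + 1))) {i j : ℕ} (hi : i ≤ l) (hj : j ≤ l)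
    (h : D (p i) (p j)) : j ≤ i + 1 := by
  have := hB.no_forward _ _ h
  rw [hB.depth_path_s12 hpath hi, hB.depth_path_s12 hpath hj] at this
  omega

theorem path_ne_root (hB : IsBFSTree D r T depth) (hpath : ∀ i, i < l → T (p i) (p (i + 1)))
    {i : ℕ} (h1 : 1 ≤ i) (hi : i ≤ l) : p i ≠ r := by
  intro h
  have := hB.depth_path_s12 hpath hi
  rw [h, hB.root_level] at this
  omega

end IsBFSTree

namespace NiceForest

variable {D F : V → V → Prop} {l : ℕ} {p : ℕ → V} {S : Set V}

theorem finite_children (hF : NiceForest D l p S F) (v : V) : {w | F v w}.Finite :=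
  ((Set.finite_Iic l).image p).subset fun w hw => (hF.1 v w hw).2.2

theorem eq_of_ncard_children_lt_two (hF : NiceForest D l p S F) {v w w' : V}
    (hv : ¬ 2 ≤ {w | F v w}.ncard) (hw : F v w) (hw' : F v w') : w = w' := by
  by_contra hne
  exact hv ((Set.one_lt_ncard_iff (hF.finite_children v)).2 ⟨w, w', hw, hw', hne⟩)

theorem not_transGen_self (hF : NiceForest D l p S F) {v : V} (hv : v ∈ p '' Set.Iic l) :
    ¬ Relation.TransGen F v v := by
  obtain ⟨s, hs, hsv⟩ := hF.2.2.2.1 v hv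
  induction hsv with
  | refl =>
    intro hc
    obtain ⟨c, -, hcs⟩ := Relation.TransGen.tail'_iff.mp hc
    exact hF.2.1 s hs c hcs
  | @tail u v _ huv ih =>
    intro hc
    obtain ⟨c, hvc, hcv⟩ := Relation.TransGen.tail'_iff.mp hc
    have hvS : v ∉ S := fun hvS => hF.2.1 v hvS u huv
    obtain ⟨w, -, hw⟩ := hF.2.2.1 v (hF.1 u v huv).2.2 hvS
    obtain rfl : c = u := (hw c hcv).trans (hw u huv).symm
    exact ih (hF.1 _ _ huv).2.1 (Relation.TransGen.head' huv hvc)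

end NiceForest

def setParent (F : V → V → Prop) (v u : V) : V → V → Prop :=
  fun a b => (b = v ∧ a = u) ∨ (b ≠ v ∧ F a b)

section setParent

variable {F : V → V → Prop} {a b u v w : V}

theorem setParent_self_iff : setParent F v u a v ↔ a = u := by
  simp [setParent]

theorem setParent_iff_of_ne (hb : b ≠ v) : setParent F v u a b ↔ F a b := by
  simp [setParent, hb]

theorem reflTransGen_setParent_of_not_reflTransGen (h : Relation.ReflTransGen F a w)
    (hvw : ¬ Relation.ReflTransGen F v w) : Relation.ReflTransGen (setParent F v u) a w := by
  induction h using Relation.ReflTransGen.head_induction_on with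
  | refl => rfl
  | head hab hbw ih =>
    refine .head ((setParent_iff_of_ne ?_).2 hab) ih
    rintro rfl
    exact hvw hbw

theorem reflTransGen_setParent_of_not_transGen_self (hv : ¬ Relation.TransGen F v v)
    (h : Relation.ReflTransGen F v w) : Relation.ReflTransGen (setParent F v u) v w := by
  induction h with
  | refl => rfl
  | @tail b c hvb hbc ih =>
    refine ih.tail ((setParent_iff_of_ne ?_).2 hbc)
    rintro rfl
    exact hv (.tail' hvb hbc)

theorem setOf_subset_setParent (ha : ¬ F a v) : {w | F a w} ⊆ {w | setParent F v u a w} :=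
  fun w hw => Or.inr ⟨by rintro rfl; exact ha hw, hw⟩

theorem NiceForest.exists_root_reflTransGen_setParent {D : V → V → Prop} {l : ℕ} {p : ℕ → V}
    {S : Set V} (hF : NiceForest D l p S F) (hu : u ∈ p '' Set.Iic l) (hv : v ∈ p '' Set.Iic l)
    (hvu : ¬ Relation.ReflTransGen F v u) (hw : w ∈ p '' Set.Iic l) :
    ∃ s ∈ S, Relation.ReflTransGen (setParent F v u) s w := by
  by_cases hvw : Relation.ReflTransGen F v w
  · obtain ⟨s, hs, hsu⟩ := hF.2.2.2.1 u hu
    exact ⟨s, hs, ((reflTransGen_setParent_of_not_reflTransGen hsu hvu).tail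
      (setParent_self_iff.2 rfl)).trans
      (reflTransGen_setParent_of_not_transGen_self (hF.not_transGen_self hv) hvw)⟩
  · obtain ⟨s, hs, hsw⟩ := hF.2.2.2.1 w hw
    exact ⟨s, hs, reflTransGen_setParent_of_not_reflTransGen hsw hvw⟩

end setParent

/-- The key-vertex-free subpath `p x, …, p y` of the path `p 0, …, p l`, together with the
facts about `D`, its BFS tree and the nice forest `F` that the argument uses. -/
structure KeyFreeZone (D : V → V → Prop) (r : V) (l : ℕ) (p : ℕ → V) (S : Set V)
    (F : V → V → Prop) (x y : ℕ) : Prop where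
  inj : ∀ {i j : ℕ}, i ≤ l → j ≤ l → p i = p j → i = j
  adj_succ : ∀ i, i < l → D (p i) (p (i + 1))
  le_succ_of_adj : ∀ i j, i ≤ l → j ≤ l → D (p i) (p j) → j ≤ i + 1
  ne_root : ∀ i, x ≤ i → i ≤ y → p i ≠ r
  roots : S = {v ∈ p '' Set.Iio l | ∃ u, u ∉ p '' Set.Iic l ∧ D u v}
  nice : NiceForest D l p S F
  maximal : ∀ F', NiceForest D l p S F' →
    (treeLeaves F' (p '' Set.Iic l)).ncard ≤ (treeLeaves F (p '' Set.Iic l)).ncard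
  le : x ≤ y
  lt : y < l
  not_key : ∀ i, x ≤ i → i ≤ y → p i ∉ keyVertices l p S F
  not_F_left : ¬ F (p (x - 1)) (p x)
  not_F_right : ¬ F (p y) (p (y + 1))

open Classical in
noncomputable def parentIndex (F : V → V → Prop) (p : ℕ → V) (l m : ℕ) : ℕ :=
  if h : ∃ t ≤ l, F (p t) (p m) then h.choose else 0

def IsBlockStart (F : V → V → Prop) (p : ℕ → V) (l x y m : ℕ) : Prop :=
  x ≤ m ∧ m ≤ y ∧ parentIndex F p l m ≠ m - 1

open Classical in
noncomputable def nextBlockStart (F : V → V → Prop) (p : ℕ → V) (l x y β : ℕ) : ℕ :=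
  Nat.find (⟨β + y + 1, by omega, Or.inr (by omega)⟩ :
    ∃ b, β < b ∧ (IsBlockStart F p l x y b ∨ y < b))

section blockStarts

open Classical

variable {F : V → V → Prop} {p : ℕ → V} {l x y β b m : ℕ}

theorem parentIndex_of_not_isBlockStart (h1 : x ≤ m) (h2 : m ≤ y)
    (hm : ¬ IsBlockStart F p l x y m) : parentIndex F p l m = m - 1 := by
  by_contra h
  exact hm ⟨h1, h2, h⟩

theorem lt_nextBlockStart : β < nextBlockStart F p l x y β :=
  (Nat.find_spec (p := fun b => β < b ∧ (IsBlockStart F p l x y b ∨ y < b)) _).1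

theorem nextBlockStart_le (hb : IsBlockStart F p l x y b) (hβb : β < b) :
    nextBlockStart F p l x y β ≤ b :=
  Nat.find_min' _ ⟨hβb, Or.inl hb⟩

theorem nextBlockStart_le_succ (hβ : β ≤ y) : nextBlockStart F p l x y β ≤ y + 1 :=
  Nat.find_min' _ ⟨by omega, Or.inr (by omega)⟩

theorem isBlockStart_nextBlockStart (h : nextBlockStart F p l x y β ≤ y) :
    IsBlockStart F p l x y (nextBlockStart F p l x y β) :=
  (Nat.find_spec (p := fun b => β < b ∧ (IsBlockStart F p l x y b ∨ y < b)) _).2.resolve_right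
    (not_lt.2 h)

theorem not_isBlockStart_of_lt_nextBlockStart (hβb : β < b)
    (hb : b < nextBlockStart F p l x y β) : ¬ IsBlockStart F p l x y b :=
  fun h => (nextBlockStart_le h hβb).not_gt hb

end blockStarts
namespace KeyFreeZone

variable {D F : V → V → Prop} {r : V} {l x y : ℕ} {p : ℕ → V} {S : Set V}
  (Z : KeyFreeZone D r l p S F x y)

include Z

theorem adj_pred {m : ℕ} (h1 : 1 ≤ m) (h2 : m ≤ l) : D (p (m - 1)) (p m) := by
  simpa [Nat.sub_add_cancel h1] using Z.adj_succ (m - 1) (by omega)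

theorem not_mem_roots {m : ℕ} (h1 : x ≤ m) (h2 : m ≤ y) : p m ∉ S :=
  fun hm => Z.not_key m h1 h2 (Or.inl (Or.inl (Or.inl hm)))

theorem mem_of_adj {m : ℕ} (h1 : x ≤ m) (h2 : m ≤ y) {u : V} (hu : D u (p m)) :
    u ∈ p '' Set.Iic l := by
  by_contra hu'
  exact Z.not_mem_roots h1 h2 (Z.roots ▸ ⟨⟨m, by grind [Z.lt], rfl⟩, u, hu', hu⟩)

theorem exists_child {m : ℕ} (h1 : x ≤ m) (h2 : m ≤ y) : ∃ w, F (p m) w := by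
  by_contra! h
  exact Z.not_key m h1 h2 (Or.inl (Or.inl (Or.inr ⟨⟨m, by grind [Z.lt], rfl⟩, h⟩)))

theorem child_unique_of_parent {m : ℕ} (h1 : x ≤ m) (h2 : m ≤ y) {u w w' : V}
    (hu : F u (p m)) (hw : F u w) (hw' : F u w') : w = w' :=
  Z.nice.eq_of_ncard_children_lt_two (fun h => Z.not_key m h1 h2 (Or.inr ⟨u, hu, h⟩)) hw hw'

theorem parentIndex_spec {m : ℕ} (h1 : x ≤ m) (h2 : m ≤ y) :
    parentIndex F p l m ≤ l ∧ F (p (parentIndex F p l m)) (p m) ∧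
      ∀ u, F u (p m) → u = p (parentIndex F p l m) := by
  obtain ⟨u, hu, huniq⟩ :=
    Z.nice.2.2.1 _ ⟨m, by grind [Z.lt], rfl⟩ (Z.not_mem_roots h1 h2)
  obtain ⟨t, ht, rfl⟩ := (Z.nice.1 u (p m) hu).2.1
  have hex : ∃ t ≤ l, F (p t) (p m) := ⟨t, ht, hu⟩
  rw [parentIndex, dif_pos hex]
  exact ⟨hex.choose_spec.1, hex.choose_spec.2, fun w hw =>
    (huniq w hw).trans (huniq _ hex.choose_spec.2).symm⟩

theorem parentIndex_le {m : ℕ} (h1 : x ≤ m) (h2 : m ≤ y) : parentIndex F p l m ≤ l :=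
  (Z.parentIndex_spec h1 h2).1

theorem F_parentIndex {m : ℕ} (h1 : x ≤ m) (h2 : m ≤ y) :
    F (p (parentIndex F p l m)) (p m) :=
  (Z.parentIndex_spec h1 h2).2.1

theorem eq_parentIndex {m : ℕ} (h1 : x ≤ m) (h2 : m ≤ y) {u : V} (hu : F u (p m)) :
    u = p (parentIndex F p l m) :=
  (Z.parentIndex_spec h1 h2).2.2 u hu

theorem parentIndex_eq_or_lt {m : ℕ} (h1 : x ≤ m) (h2 : m ≤ y) :
    parentIndex F p l m = m - 1 ∨ m < parentIndex F p l m := by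
  have hF := Z.F_parentIndex h1 h2
  have hle := Z.le_succ_of_adj _ _ (Z.parentIndex_le h1 h2) (by grind [Z.lt]) (Z.nice.1 _ _ hF).1
  have hne : parentIndex F p l m ≠ m := fun h =>
    Z.nice.not_transGen_self ⟨m, by grind [Z.lt], rfl⟩ (.single (by rwa [h] at hF))
  omega

theorem isBlockStart_left : IsBlockStart F p l x y x := by
  refine ⟨le_rfl, Z.le, fun h => Z.not_F_left ?_⟩
  simpa [h] using Z.F_parentIndex le_rfl Z.le

theorem lt_parentIndex {β : ℕ} (hβ : IsBlockStart F p l x y β) : β < parentIndex F p l β :=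
  (Z.parentIndex_eq_or_lt hβ.1 hβ.2.1).resolve_left hβ.2.2

theorem eq_pred_of_adj {m : ℕ} (h1 : x < m) (h2 : m ≤ y) (hm : ¬ IsBlockStart F p l x y m)
    {u : V} (hu : D u (p m)) : u = p (m - 1) := by
  have hpred : D (p (m - 1)) (p m) := Z.adj_pred (by omega) (by grind [Z.lt])
  have hF : F (p (m - 1)) (p m) := by
    simpa [parentIndex_of_not_isBlockStart h1.le h2 hm] using Z.F_parentIndex h1.le h2
  rcases Z.nice.2.2.2.2.1 (m - 1) m (by grind [Z.lt]) (by grind [Z.lt]) (by omega) hF with h | h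
  · exact absurd (Or.inl (Or.inr h)) (Z.not_key (m - 1) (by omega) (by omega))
  · obtain ⟨a, ha⟩ := Set.ncard_eq_one.mp h
    have hu' : u ∈ {u | D u (p m)} := hu
    have hpred' : p (m - 1) ∈ {u | D u (p m)} := hpred
    rw [ha] at hu' hpred'
    exact hu'.trans hpred'.symm

theorem exists_index_of_adj {m : ℕ} (h1 : x ≤ m) (h2 : m ≤ y) {u : V} (hu : D u (p m)) :
    ∃ γ ≤ l, u = p γ ∧ m ≤ γ + 1 ∧ (m < parentIndex F p l m → γ ≤ parentIndex F p l m) := by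
  obtain ⟨γ, hγ, rfl⟩ := Z.mem_of_adj h1 h2 hu
  refine ⟨γ, hγ, rfl, Z.le_succ_of_adj _ _ hγ (by grind [Z.lt]) hu, fun hlt => ?_⟩
  by_contra! hγt
  exact Z.nice.2.2.2.2.2 _ m (Z.parentIndex_le h1 h2) (by grind [Z.lt]) hlt
    (Z.F_parentIndex h1 h2) γ hγt hγ hu

theorem niceForest_setParent {m : ℕ} (h1 : x < m) (h2 : m ≤ y)
    (hpar : m < parentIndex F p l m) (hnd : ¬ Relation.ReflTransGen F (p m) (p (m - 1))) :
    NiceForest D l p S (setParent F (p m) (p (m - 1))) := by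
  have hml : m ≤ l := by grind [Z.lt]
  have hpm : p m ∈ p '' Set.Iic l := ⟨m, hml, rfl⟩
  have hpm1 : p (m - 1) ∈ p '' Set.Iic l := ⟨m - 1, by grind, rfl⟩
  obtain ⟨c, hc⟩ := Z.exists_child (m := m - 1) (by omega) (by omega)
  have hcm : c ≠ p m := by
    rintro rfl
    have := Z.inj (by omega) (Z.parentIndex_le h1.le h2) (Z.eq_parentIndex h1.le h2 hc)
    omega
  have harcs : ∀ u v, setParent F (p m) (p (m - 1)) u v →
      D u v ∧ u ∈ p '' Set.Iic l ∧ v ∈ p '' Set.Iic l := by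
    rintro u v (⟨rfl, rfl⟩ | ⟨-, huv⟩)
    · exact ⟨Z.adj_pred (by omega) hml, hpm1, hpm⟩
    · exact Z.nice.1 u v huv
  have hfin : ∀ a, {w | setParent F (p m) (p (m - 1)) a w}.Finite := fun a =>
    ((Set.finite_Iic l).image p).subset fun w hw => (harcs a w hw).2.2
  refine ⟨harcs, ?_, ?_, ?_, ?_, ?_⟩
  · rintro s hs u (⟨rfl, -⟩ | ⟨-, hus⟩)
    · exact Z.not_mem_roots h1.le h2 hs
    · exact Z.nice.2.1 s hs u hus
  · intro v hv hvS
    by_cases hvm : v = p m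
    · subst hvm
      exact ⟨p (m - 1), setParent_self_iff.2 rfl, fun u hu => setParent_self_iff.1 hu⟩
    · simp_rw [setParent_iff_of_ne hvm]
      exact Z.nice.2.2.1 v hv hvS
  · exact fun v hv => Z.nice.exists_root_reflTransGen_setParent hpm1 hpm hnd hv
  · rintro i j hi hj hij (⟨hjm, him⟩ | ⟨hjm, hF⟩)
    · left
      rw [him]
      calc 2 = ({c, p m} : Set V).ncard := (Set.ncard_pair hcm).symm
        _ ≤ _ := Set.ncard_le_ncard (Set.insert_subset_iff.2
          ⟨Or.inr ⟨hcm, hc⟩, Set.singleton_subset_iff.2 (Or.inl ⟨rfl, rfl⟩)⟩) (hfin _)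
    · refine (Z.nice.2.2.2.2.1 i j hi hj hij hF).imp_left fun h => ?_
      refine h.trans (Set.ncard_le_ncard (setOf_subset_setParent fun him => hjm ?_) (hfin _))
      exact Z.child_unique_of_parent h1.le h2 him hF him
  · rintro i j hi hj hji (⟨hjm, him⟩ | ⟨-, hF⟩)
    · have := Z.inj hj hml hjm
      have := Z.inj hi (by omega) him
      omega
    · exact Z.nice.2.2.2.2.2 i j hi hj hji hF

theorem treeLeaves_ssubset_setParent {m : ℕ} (h1 : x < m) (h2 : m ≤ y)
    (hpar : m < parentIndex F p l m) :
    treeLeaves F (p '' Set.Iic l) ⊂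
      treeLeaves (setParent F (p m) (p (m - 1))) (p '' Set.Iic l) := by
  obtain ⟨c, hc⟩ := Z.exists_child (m := m - 1) (by omega) (by omega)
  have htF := Z.F_parentIndex h1.le h2
  refine (Set.ssubset_iff_of_subset ?_).2
    ⟨_, ⟨⟨_, Z.parentIndex_le h1.le h2, rfl⟩, ?_⟩, fun h => h.2 _ htF⟩
  · rintro v ⟨hv, hleaf⟩
    refine ⟨hv, ?_⟩
    rintro w (⟨rfl, rfl⟩ | ⟨-, hvw⟩)
    · exact hleaf c hc
    · exact hleaf w hvw
  · rintro w (⟨rfl, h⟩ | ⟨hwm, hw⟩)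
    · have := Z.inj (Z.parentIndex_le h1.le h2) (by grind [Z.lt]) h
      omega
    · exact hwm (Z.child_unique_of_parent h1.le h2 htF hw htF)

/-- Otherwise moving `p m` under `p (m - 1)` would turn its old parent into a new leaf. -/
theorem reflTransGen_pred_of_lt_parentIndex {m : ℕ} (h1 : x < m) (h2 : m ≤ y)
    (hpar : m < parentIndex F p l m) : Relation.ReflTransGen F (p m) (p (m - 1)) := by
  by_contra hnd
  exact (Set.ncard_lt_ncard (Z.treeLeaves_ssubset_setParent h1 h2 hpar)
    (((Set.finite_Iic l).image p).subset (Set.sep_subset _ _))).not_ge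
    (Z.maximal _ (Z.niceForest_setParent h1 h2 hpar hnd))

theorem reflTransGen_of_lt_nextBlockStart {β m : ℕ} (hβ : IsBlockStart F p l x y β)
    (hβm : β ≤ m) (hm : m < nextBlockStart F p l x y β) :
    Relation.ReflTransGen F (p β) (p m) := by
  induction m, hβm using Nat.le_induction with
  | base => rfl
  | succ m hβm ih =>
    have := hβ.1
    have hny : nextBlockStart F p l x y β ≤ y + 1 := nextBlockStart_le_succ hβ.2.1
    have hmy : m + 1 ≤ y := by omega
    have hF := Z.F_parentIndex (by omega : x ≤ m + 1) hmy
    rw [parentIndex_of_not_isBlockStart (by omega) hmy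
      (not_isBlockStart_of_lt_nextBlockStart (by omega) hm), Nat.add_sub_cancel] at hF
    exact (ih (by omega)).tail hF

theorem reflTransGen_of_le_isBlockStart {β m : ℕ} (hβ : IsBlockStart F p l x y β)
    (hxm : x ≤ m) (hmβ : m ≤ β) : Relation.ReflTransGen F (p β) (p m) := by
  refine Nat.decreasingInduction (motive := fun m _ => x ≤ m → Relation.ReflTransGen F (p β) (p m))
    (fun k hk ih hxk => ?_) (fun _ => .refl) hmβ hxm
  have hky : k + 1 ≤ y := by have := hβ.2.1; omega
  replace ih := ih (by omega)
  by_cases hb : IsBlockStart F p l x y (k + 1)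
  · simpa using ih.trans (Z.reflTransGen_pred_of_lt_parentIndex (by omega) hky
      (Z.lt_parentIndex hb))
  · rcases ih.cases_tail with h | ⟨c, hc, hcF⟩
    · obtain rfl := Z.inj (by grind [Z.lt]) (by grind [Z.lt, IsBlockStart]) h
      exact absurd hβ hb
    · rwa [Z.eq_parentIndex (by omega) hky hcF,
        parentIndex_of_not_isBlockStart (by omega) hky hb, Nat.add_sub_cancel] at hc

theorem exists_index_of_reflTransGen {β : ℕ} (hβ : IsBlockStart F p l x y β) {v : V}
    (h : Relation.ReflTransGen F (p β) v) :
    ∃ s < nextBlockStart F p l x y β, s ≤ l ∧ v = p s := by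
  induction h with
  | refl => exact ⟨β, lt_nextBlockStart, by grind [Z.lt, IsBlockStart], rfl⟩
  | @tail u w _ huw ih =>
    obtain ⟨s, hsn, hsl, rfl⟩ := ih
    obtain ⟨s', hs'l, rfl⟩ := (Z.nice.1 _ _ huw).2.2
    refine ⟨s', ?_, hs'l, rfl⟩
    have hs' := Z.le_succ_of_adj _ _ hsl hs'l (Z.nice.1 _ _ huw).1
    by_contra! hns
    obtain rfl : s' = nextBlockStart F p l x y β := by omega
    have hxs : x < nextBlockStart F p l x y β := lt_of_le_of_lt hβ.1 lt_nextBlockStart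
    rcases Nat.lt_or_ge y (nextBlockStart F p l x y β) with hy | hy
    · have : nextBlockStart F p l x y β ≤ y + 1 := nextBlockStart_le_succ hβ.2.1
      have hF := Z.not_F_right
      rw [show y = s by omega, show s + 1 = nextBlockStart F p l x y β by omega] at hF
      exact hF huw
    · refine (isBlockStart_nextBlockStart hy).2.2 ?_
      have := Z.inj hsl (Z.parentIndex_le hxs.le hy) (Z.eq_parentIndex hxs.le hy huw)
      omega

/-- A block start that is not the topmost one hangs below the last vertex of the next block. -/
theorem parentIndex_eq {β : ℕ} (hβ : IsBlockStart F p l x y β)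
    (hnext : nextBlockStart F p l x y β ≤ y) :
    parentIndex F p l β = nextBlockStart F p l x y (nextBlockStart F p l x y β) - 1 := by
  set n := nextBlockStart F p l x y β
  set t := parentIndex F p l β
  have hn : IsBlockStart F p l x y n := isBlockStart_nextBlockStart hnext
  have hβn : β < n := lt_nextBlockStart
  have hβt : β < t := Z.lt_parentIndex hβ
  have htF : F (p t) (p β) := Z.F_parentIndex hβ.1 hβ.2.1
  have htl : t ≤ l := Z.parentIndex_le hβ.1 hβ.2.1
  have hnt : n ≤ t := by
    by_contra! htn
    exact Z.nice.not_transGen_self ⟨β, by grind [Z.lt, IsBlockStart], rfl⟩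
      (.tail' (Z.reflTransGen_of_lt_nextBlockStart hβ hβt.le htn) htF)
  have htn' : t < nextBlockStart F p l x y n := by
    rcases (Z.reflTransGen_of_le_isBlockStart hn hβ.1 hβn.le).cases_tail with h | ⟨c, hc, hcF⟩
    · have := Z.inj (by grind [Z.lt, IsBlockStart]) (by grind [Z.lt, IsBlockStart]) h
      omega
    · obtain ⟨s, hs, hsl, hcs⟩ := Z.exists_index_of_reflTransGen hn hc
      have := Z.inj htl hsl ((Z.eq_parentIndex hβ.1 hβ.2.1 hcF).symm.trans hcs)
      omega
  have htn'' : nextBlockStart F p l x y n ≤ t + 1 := by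
    by_cases hty : t + 1 ≤ y
    · refine nextBlockStart_le ⟨by grind [IsBlockStart], hty, fun h => ?_⟩ (by omega)
      have hF : F (p t) (p (t + 1)) := by
        simpa [h] using Z.F_parentIndex (m := t + 1) (by grind [IsBlockStart]) hty
      have := Z.inj (by grind [Z.lt]) (by grind [Z.lt, IsBlockStart])
        (Z.child_unique_of_parent hβ.1 hβ.2.1 htF hF htF)
      omega
    · have : nextBlockStart F p l x y n ≤ y + 1 := nextBlockStart_le_succ hn.2.1
      omega
  omega

theorem setDisconnects_of_not_isBlockStart {c τ : ℕ} (hxc : x ≤ c) (hcτ : c < τ) (hτ : τ ≤ y)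
    (hB : ∀ b, c < b → b ≤ τ → ¬ IsBlockStart F p l x y b) :
    SetDisconnects D r {p c} (p τ) := by
  refine setDisconnects_of_inArcs_mem (A := p '' Set.Icc c τ) ?_ ?_ ⟨τ, ⟨hcτ.le, le_rfl⟩, rfl⟩ ?_
  · rintro ⟨s, hs, hsr⟩
    exact Z.ne_root s (by grind) (by grind) hsr
  · rintro _ ⟨s, hs, rfl⟩ hsc u hu
    have hcs : c < s := by
      rcases hs.1.lt_or_eq with h | rfl
      · exact h
      · exact absurd rfl hsc
    rw [Z.eq_pred_of_adj (by omega) (by grind) (hB s hcs hs.2) hu]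
    exact ⟨s - 1, by grind, rfl⟩
  · intro h
    have := Z.inj (by grind [Z.lt]) (by grind [Z.lt]) h
    omega

/-- `p γ` separates the parent of `p β` from the root, so Rule 4 applies. -/
theorem not_adj_isBlockStart {β γ : ℕ} (hred : Reduced D r) (hβ : IsBlockStart F p l x y β)
    (hnext : nextBlockStart F p l x y β ≤ y) (h1 : nextBlockStart F p l x y β ≤ γ)
    (h2 : γ < parentIndex F p l β) : ¬ D (p γ) (p β) := by
  intro hD
  have hβn : β < nextBlockStart F p l x y β := lt_nextBlockStart
  have hnn : nextBlockStart F p l x y (nextBlockStart F p l x y β) ≤ y + 1 :=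
    nextBlockStart_le_succ hnext
  have ht := Z.parentIndex_eq hβ hnext
  refine hred.rule4 {p γ} _ (p β) (by simp) ?_ (by simpa using hD)
    (Z.nice.1 _ _ (Z.F_parentIndex hβ.1 hβ.2.1)).1
  refine Z.setDisconnects_of_not_isBlockStart (by grind [IsBlockStart]) h2 (by omega)
    fun b hγb hbt => not_isBlockStart_of_lt_nextBlockStart (β := nextBlockStart F p l x y β)
      (by omega) (by omega)

theorem exists_index_of_adj_isBlockStart {β : ℕ} (hred : Reduced D r)
    (hβ : IsBlockStart F p l x y β) (hnext : nextBlockStart F p l x y β ≤ y) {u : V}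
    (hu : D u (p β)) :
    ∃ γ ≤ l, u = p γ ∧ (β ≤ γ + 1 ∧ γ < nextBlockStart F p l x y β ∨
      γ = nextBlockStart F p l x y (nextBlockStart F p l x y β) - 1) := by
  obtain ⟨γ, hγl, rfl, hβγ, hγt⟩ := Z.exists_index_of_adj hβ.1 hβ.2.1 hu
  refine ⟨γ, hγl, rfl, ?_⟩
  have hγt := hγt (Z.lt_parentIndex hβ)
  rw [← Z.parentIndex_eq hβ hnext]
  by_contra! h
  exact Z.not_adj_isBlockStart hred hβ hnext (h.1 hβγ) (by omega) hu

/-- The vertices with index in `[i1, β) ∪ [i3, nextBlockStart β)` can only be entered from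
outside through `p i1` or `p i3`. -/
theorem setDisconnects_pair {i1 i2 i3 β : ℕ} (hred : Reduced D r) (hx : x ≤ i1) (h12 : i1 < i2)
    (hβ : IsBlockStart F p l x y β) (h2β : i2 < β) (hβ3 : β ≤ i3)
    (h3 : i3 < nextBlockStart F p l x y β) :
    SetDisconnects D r {p i1, p i3} (p i2) := by
  have hny : nextBlockStart F p l x y β ≤ y + 1 := nextBlockStart_le_succ hβ.2.1
  refine setDisconnects_of_inArcs_mem
    (A := p '' (Set.Ico i1 β ∪ Set.Ico i3 (nextBlockStart F p l x y β))) ?_ ?_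
    ⟨i2, Or.inl ⟨h12.le, h2β⟩, rfl⟩ ?_
  · rintro ⟨s, hs, hsr⟩
    exact Z.ne_root s (by grind) (by grind) hsr
  · rintro _ ⟨τ, hτ, rfl⟩ hτX u hu
    have h1τ : τ ≠ i1 := by rintro rfl; exact hτX (Or.inl rfl)
    have h3τ : τ ≠ i3 := by rintro rfl; exact hτX (Or.inr rfl)
    by_cases hτB : IsBlockStart F p l x y τ
    · have hτβ : τ < β := by
        by_contra!
        exact not_isBlockStart_of_lt_nextBlockStart (β := β) (by grind) (by grind) hτB
      have hnτ : nextBlockStart F p l x y τ ≤ β := nextBlockStart_le hβ hτβ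
      obtain ⟨γ, -, rfl, hγ⟩ := Z.exists_index_of_adj_isBlockStart hred hτB (by omega) hu
      refine ⟨γ, ?_, rfl⟩
      rcases hγ with hγ | rfl
      · left; grind
      · rcases hnτ.lt_or_eq with hlt | heq
        · have := nextBlockStart_le hβ hlt
          have : nextBlockStart F p l x y τ <
              nextBlockStart F p l x y (nextBlockStart F p l x y τ) := lt_nextBlockStart
          have : τ < nextBlockStart F p l x y τ := lt_nextBlockStart
          left; grind
        · right; rw [heq]; grind
    · rw [Z.eq_pred_of_adj (by grind) (by grind) hτB hu]
      exact ⟨τ - 1, by grind, rfl⟩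
  · rintro (h | h)
    · have := Z.inj (by grind [Z.lt]) (by grind [Z.lt]) h
      omega
    · have := Z.inj (by grind [Z.lt]) (by grind [Z.lt]) (Set.mem_singleton_iff.1 h)
      omega

theorem not_adj_of_lt_of_lt (hred : Reduced D r) {i1 i2 i3 : ℕ} {z : V} (hx : x ≤ i1)
    (h12 : i1 < i2) (h23 : i2 < i3) (hy : i3 ≤ y) (h1 : D (p i1) z) (h2 : D (p i2) z) :
    ¬ D (p i3) z := by
  classical
  obtain ⟨β, hβ, hβ3, hmax⟩ : ∃ β, IsBlockStart F p l x y β ∧ β ≤ i3 ∧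
      ∀ b, β < b → b ≤ i3 → ¬ IsBlockStart F p l x y b :=
    ⟨_, Nat.findGreatest_spec (by omega) Z.isBlockStart_left, Nat.findGreatest_le i3,
      fun _ => Nat.findGreatest_is_greatest⟩
  intro h3
  rcases Nat.lt_or_ge i2 β with h2β | hβ2
  · have h3n : i3 < nextBlockStart F p l x y β := by
      by_contra! h
      exact hmax _ lt_nextBlockStart h (isBlockStart_nextBlockStart (by omega))
    refine hred.rule4 {p i1, p i3} (p i2) z ((Set.ncard_insert_le _ _).trans (by simp))
      (Z.setDisconnects_pair hred hx h12 hβ h2β hβ3 h3n) ?_ h2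
    rintro _ (rfl | rfl)
    exacts [h1, h3]
  · refine hred.rule4 {p i2} (p i3) z (by simp)
      (Z.setDisconnects_of_not_isBlockStart (by omega) h23 hy
        fun b hb => hmax b (by omega)) (by simpa using h2) h3

theorem ncard_adj_le_two (hred : Reduced D r) (z : V) :
    {v ∈ p '' Set.Icc x y | D v z}.ncard ≤ 2 := by
  have himage : {v ∈ p '' Set.Icc x y | D v z} = p '' {i ∈ Set.Icc x y | D (p i) z} := by
    ext v
    simp only [Set.mem_ofPred_eq, Set.mem_image]
    grind
  rw [himage]
  refine (Set.ncard_image_le ((Set.finite_Icc x y).subset (Set.sep_subset _ _))).trans ?_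
  exact Set.ncard_le_two_of_forall_not_lt_lt fun i1 hi1 i2 hi2 i3 hi3 h12 h23 =>
    Z.not_adj_of_lt_of_lt hred hi1.1.1 h12 h23 hi3.1.2 hi1.2 hi2.2 hi3.2

end KeyFreeZone

theorem stmt12_general (D T : V → V → Prop) (r : V) (depth : V → ℕ)
    (hred : Reduced D r)
    (hBFS : IsBFSTree D r T depth)
    (l : ℕ) (p : ℕ → V) (hinj : Set.InjOn p (Set.Iic l))
    (hpath : ∀ i, i < l → T (p i) (p (i + 1)))
    (S : Set V)
    (hS : S = {v ∈ p '' Set.Iio l | ∃ u, u ∉ p '' Set.Iic l ∧ D u v})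
    (F : V → V → Prop) (hF : NiceForest D l p S F)
    (hmax : ∀ F' : V → V → Prop, NiceForest D l p S F' →
      (treeLeaves F' (p '' Set.Iic l)).ncard ≤ (treeLeaves F (p '' Set.Iic l)).ncard)
    (x y : ℕ) (hx : 1 ≤ x) (hxy : x ≤ y) (hy : y < l)
    (hnokey : ∀ i, x ≤ i → i ≤ y → p i ∉ keyVertices l p S F)
    (hb1 : ¬ F (p (x - 1)) (p x)) (hb2 : ¬ F (p y) (p (y + 1))) :
    ∀ z, z ∉ p '' Set.Icc x y → {v ∈ p '' Set.Icc x y | D v z}.ncard ≤ 2 := by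
  have Z : KeyFreeZone D r l p S F x y :=
    { inj := fun hi hj h => hinj hi hj h
      adj_succ := fun i hi => hBFS.branching.sub _ _ (hpath i hi)
      le_succ_of_adj := fun _ _ hi hj => hBFS.le_succ_of_adj_path_s12 hpath hi hj
      ne_root := fun _ hxi hiy => hBFS.path_ne_root hpath (hx.trans hxi) (by omega)
      roots := hS
      nice := hF
      maximal := hmax
      le := hxy
      lt := hy
      not_key := hnokey
      not_F_left := hb1
      not_F_right := hb2 }
  exact fun z _ => Z.ncard_adj_le_two hred z

theorem stmt12 [Fintype V] (D T : V → V → Prop) (r : V) (depth : V → ℕ) (k : ℕ)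
    (hred : Reduced D r)
    (hno : ¬ HasOutBranchingWithLeaves D r k)
    (hBFS : IsBFSTree D r T depth)
    (l : ℕ) (p : ℕ → V) (hinj : Set.InjOn p (Set.Iic l))
    (hpath : ∀ i, i < l → T (p i) (p (i + 1)))
    (hdeg : ∀ i, i ≤ l → ∃! w, T (p i) w)
    (S : Set V)
    (hS : S = {v ∈ p '' Set.Iio l | ∃ u, u ∉ p '' Set.Iic l ∧ D u v})
    (F : V → V → Prop) (hF : NiceForest D l p S F)
    (hmax : ∀ F' : V → V → Prop, NiceForest D l p S F' →
      (treeLeaves F' (p '' Set.Iic l)).ncard ≤ (treeLeaves F (p '' Set.Iic l)).ncard)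
    (x y : ℕ) (hx : 1 ≤ x) (hxy : x ≤ y) (hy : y < l)
    (hnokey : ∀ i, x ≤ i → i ≤ y → p i ∉ keyVertices l p S F)
    (hb1 : ¬ F (p (x - 1)) (p x)) (hb2 : ¬ F (p y) (p (y + 1))) :
    ∀ z, z ∉ p '' Set.Icc x y → {v ∈ p '' Set.Icc x y | D v z}.ncard ≤ 2 :=
  stmt12_general D T r depth hred hBFS l p hinj hpath S hS F hF hmax x y hx hxy hy hnokey hb1 hb2
end
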